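/- arXiv:2409.03447 — 11 statements merged into one kernel-verified Lean document; each statement's English description precedes it below -/
import Mathlib

section
/- Let S = {s_1 < s_2 < s_3 < ...} be an infinite increasing sequence of natural numbers such that s_{n+1} - s_n tends to infinity. Then the complement ℕ \ S is an IP*-set, i.e., it intersects every IP-set in ℕ. -/
/-- The set of finite sums of distinct terms of the sequence `x`. -/
def FS {M : Type*} [AddCommMonoid M] (x : ℕ → M) : Set M :=
  {s | ∃ F : Finset ℕ, F.Nonempty ∧ s = ∑ i ∈ F, x i}

/-- `A` is an IP-set if it contains all finite sums of some sequence of nonzero elements. -/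
def IPSet {M : Type*} [AddCommMonoid M] (A : Set M) : Prop :=
  ∃ x : ℕ → M, (∀ n, x n ≠ 0) ∧ FS x ⊆ A

/-- `B` is an IP*-set if it meets every IP-set. -/
def IPStar {M : Type*} [AddCommMonoid M] (B : Set M) : Prop :=
  ∀ A : Set M, IPSet A → (B ∩ A).Nonempty

theorem stmt0 (s : ℕ → ℕ) (hs : StrictMono s)
    (hgap : Filter.Tendsto (fun n => s (n + 1) - s n) Filter.atTop Filter.atTop) :
    IPStar ((Set.range s)ᶜ) := by
  intro A hA
  by_contra hcon
  rw [Set.not_nonempty_iff_eq_empty] at hcon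
  obtain ⟨x, hx, hFS⟩ := hA
  have hsub : FS x ⊆ Set.range s := by
    intro t ht
    by_contra ht'
    have : t ∈ (Set.range s)ᶜ ∩ A := ⟨ht', hFS ht⟩
    rw [hcon] at this
    exact this
  obtain ⟨N, hN⟩ := Filter.eventually_atTop.mp (hgap.eventually_ge_atTop (x 0 + 1))
  set M := max 1 (s N) with hM
  have h1M : 1 ≤ M := le_max_left _ _
  set T := ∑ i ∈ Finset.Icc 1 M, x i with hT
  have hTge : M ≤ T := by
    calc M = ∑ _i ∈ Finset.Icc 1 M, 1 := by simp
    _ ≤ T := Finset.sum_le_sum (fun i _ => Nat.one_le_iff_ne_zero.mpr (hx i))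
  have hT1 : T ∈ FS x := ⟨Finset.Icc 1 M, ⟨1, by simp [h1M]⟩, rfl⟩
  have hT2 : x 0 + T ∈ FS x := by
    refine ⟨insert 0 (Finset.Icc 1 M), ⟨0, by simp⟩, ?_⟩
    rw [Finset.sum_insert (by simp)]
  obtain ⟨a, ha⟩ := hsub hT1
  obtain ⟨b, hb⟩ := hsub hT2
  have haN : N ≤ a := by
    by_contra hlt
    have : s a < s N := hs (lt_of_not_ge hlt)
    omega
  have hx0 : 1 ≤ x 0 := Nat.one_le_iff_ne_zero.mpr (hx 0)
  have hab : a < b := hs.lt_iff_lt.mp (by rw [ha, hb]; omega)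
  have hsb : s (a + 1) ≤ s b := hs.monotone hab
  have := hN a haN
  have hmono : s a < s (a + 1) := hs (Nat.lt_succ_self a)
  omega
end

section
/- Let S = {s_1 < s_2 < ...} be an infinite increasing sequence of natural numbers, and let n ∈ ℕ. If the sum s_{k_1} + s_{k_2} + ... + s_{k_n} does not belong to S for any indices k_1 < k_2 < ... < k_n, then ℕ \ S is an IP_n*-set. -/
/-- `A` is an IP_n-set: for every finite coloring there are `x 1, ..., x n` (positive)
all of whose finite sums lie in `A` and get the same color. -/
def IPnSet (n : ℕ) (A : Set ℕ) : Prop :=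
  ∀ (r : ℕ), 0 < r → ∀ c : ℕ → Fin r,
    ∃ (i : Fin r) (x : Fin n → ℕ), (∀ t, 0 < x t) ∧
      ∀ F : Finset (Fin n), F.Nonempty →
        (∑ t ∈ F, x t) ∈ A ∧ c (∑ t ∈ F, x t) = i

/-- `B` is an IP_n*-set if it meets every IP_n-set. -/
def IPnStar (n : ℕ) (B : Set ℕ) : Prop :=
  ∀ A : Set ℕ, IPnSet n A → (B ∩ A).Nonempty

theorem stmt1 (s : ℕ → ℕ) (hs : StrictMono s) (n : ℕ) (hn : 2 ≤ n)
    (hsum : ∀ k : Fin n → ℕ, StrictMono k → (∑ i, s (k i)) ∉ Set.range s) :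
    IPnStar n ((Set.range s)ᶜ) := by
  intro A hA
  by_contra hne
  have hAS : A ⊆ Set.range s := by
    intro a ha
    by_contra h
    exact hne ⟨a, h, ha⟩
  -- coloring by parity of 2-adic valuation
  obtain ⟨i, x, hxpos, hF⟩ := hA 2 (by norm_num)
    (fun m => ⟨padicValNat 2 m % 2, Nat.mod_lt _ (by norm_num)⟩)
  -- x is injective
  have hxinj : Function.Injective x := by
    intro a b hab
    by_contra hne'
    have h1 := hF {a} ⟨a, Finset.mem_singleton_self a⟩
    have h2 := hF {a, b} ⟨a, by simp⟩
    rw [Finset.sum_singleton] at h1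
    rw [Finset.sum_pair hne'] at h2
    have hcol : (⟨padicValNat 2 (x a) % 2, Nat.mod_lt _ (by norm_num)⟩ : Fin 2)
        = ⟨padicValNat 2 (x a + x b) % 2, Nat.mod_lt _ (by norm_num)⟩ := by
      rw [h1.2, h2.2]
    have hval : padicValNat 2 (x a + x b) = padicValNat 2 (x a) + 1 := by
      haveI : Fact (Nat.Prime 2) := ⟨Nat.prime_two⟩
      rw [← hab, ← two_mul, padicValNat.mul (by norm_num) (hxpos a).ne',
        padicValNat.self (by norm_num)]
      omega
    simp only [Fin.mk.injEq] at hcol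
    omega
  -- each x t is in the range of s
  have hxr : ∀ t, ∃ b, s b = x t := by
    intro t
    have := (hF {t} ⟨t, Finset.mem_singleton_self t⟩).1
    rw [Finset.sum_singleton] at this
    exact hAS this
  choose b hb using hxr
  have hbinj : Function.Injective b := by
    intro t u htu
    apply hxinj
    rw [← hb, ← hb, htu]
  -- sort b
  set k : Fin n → ℕ := b ∘ Tuple.sort b with hk
  have hkmono : Monotone k := Tuple.monotone_sort b
  have hkinj : Function.Injective k := hbinj.comp (Equiv.injective _)
  have hkstrict : StrictMono k := hkmono.strictMono_of_injective hkinj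
  have hsum' : ∑ i, s (k i) = ∑ t, x t := by
    rw [hk]
    rw [show (∑ i, s ((b ∘ Tuple.sort b) i)) = ∑ i, s (b (Tuple.sort b i)) from rfl]
    rw [Equiv.sum_comp (Tuple.sort b) (fun i => s (b i))]
    exact Finset.sum_congr rfl (fun t _ => hb t)
  have hmem : (∑ t, x t) ∈ A := by
    have := (hF Finset.univ (Finset.univ_nonempty_iff.2 ⟨⟨0, by omega⟩⟩)).1
    exact this
  exact hsum k hkstrict (hsum' ▸ hAS hmem)
end

section
/- Let S = {s_1 < s_2 < ...} be an infinite increasing sequence of natural numbers. If for every n ∈ ℕ and all indices k_1 < k_2 < ... < k_n, the sum s_{k_1} + ... + s_{k_n} does not belong to S, then ℕ \ S is an IP_{<ω}*-set. -/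
/-- `A` is an IP_{<ω}-set. -/
def IPltOmegaSet (A : Set ℕ) : Prop :=
  ∀ (r : ℕ), 0 < r → ∀ c : ℕ → Fin r, ∀ n : ℕ,
    ∃ (i : Fin r) (x : Fin n → ℕ), (∀ t, 0 < x t) ∧
      ∀ F : Finset (Fin n), F.Nonempty →
        (∑ t ∈ F, x t) ∈ A ∧ c (∑ t ∈ F, x t) = i

/-- `B` is an IP_{<ω}*-set if it meets every IP_{<ω}-set. -/
def IPltOmegaStar (B : Set ℕ) : Prop :=
  ∀ A : Set ℕ, IPltOmegaSet A → (B ∩ A).Nonempty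

theorem stmt2 (s : ℕ → ℕ) (hs : StrictMono s)
    (hsum : ∀ n : ℕ, 2 ≤ n → ∀ k : Fin n → ℕ, StrictMono k →
      (∑ i, s (k i)) ∉ Set.range s) :
    IPltOmegaStar ((Set.range s)ᶜ) := by
  have key : ∀ a b : ℕ, a ≠ b → s a + s b ∉ Set.range s := by
    have key' : ∀ a b : ℕ, a < b → s a + s b ∉ Set.range s := by
      intro a b hab
      have hmono : StrictMono (![a, b] : Fin 2 → ℕ) := by
        intro i j hij
        fin_cases i <;> fin_cases j <;> simp_all
      have := hsum 2 le_rfl ![a, b] hmono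
      simpa [Fin.sum_univ_two] using this
    intro a b hab
    rcases lt_or_gt_of_ne hab with h | h
    · exact key' a b h
    · simpa [add_comm] using key' b a h
  intro A hA
  by_contra hcon
  rw [Set.not_nonempty_iff_eq_empty] at hcon
  have hAs : A ⊆ Set.range s := by
    intro a ha
    by_contra hna
    exact Set.eq_empty_iff_forall_notMem.mp hcon a ⟨hna, ha⟩
  obtain ⟨i, x, hx, hF⟩ := hA 1 one_pos (fun _ => 0) 3
  have h0 : x 0 ∈ A := by simpa using (hF {0} ⟨0, by simp⟩).1
  have h2 : x 2 ∈ A := by simpa using (hF {2} ⟨2, by simp⟩).1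
  have h12 : x 1 + x 2 ∈ A := by
    have := (hF {1, 2} ⟨1, by simp⟩).1
    simpa [Finset.sum_pair (show (1 : Fin 3) ≠ 2 by decide)] using this
  have h01 : x 0 + x 1 ∈ A := by
    have := (hF {0, 1} ⟨0, by simp⟩).1
    simpa [Finset.sum_pair (show (0 : Fin 3) ≠ 1 by decide)] using this
  have htot : x 0 + x 1 + x 2 ∈ A := by
    have huniv : ({0, 1, 2} : Finset (Fin 3)) = Finset.univ := by decide
    have := (hF {0, 1, 2} ⟨0, by simp⟩).1
    rw [huniv] at this
    simpa [Fin.sum_univ_three] using this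
  obtain ⟨a, ha⟩ := hAs h0
  obtain ⟨b, hb⟩ := hAs h12
  obtain ⟨c, hc⟩ := hAs h01
  obtain ⟨d, hd⟩ := hAs h2
  by_cases heq : x 0 = x 1 + x 2
  · -- then x 2 ≠ x 0 + x 1, use d and c
    have hne : d ≠ c := by
      intro h
      have : x 2 = x 0 + x 1 := by rw [← hd, ← hc, h]
      have h1 : 0 < x 1 := hx 1
      omega
    apply key d c hne
    rw [hd, hc]
    have : x 2 + (x 0 + x 1) = x 0 + x 1 + x 2 := by ring
    rw [this]
    exact hAs htot
  · have hne : a ≠ b := by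
      intro h
      exact heq (by rw [← ha, ← hb, h])
    apply key a b hne
    rw [ha, hb]
    have : x 0 + (x 1 + x 2) = x 0 + x 1 + x 2 := by ring
    rw [this]
    exact hAs htot
end

section
/- Let p be an integral polynomial of degree at least 2. Then the set {p(n) : n ∈ ℤ} does not contain any Δ-set, i.e., there is no infinite set F = {f_1, f_2, ...} ⊆ ℤ such that every difference f_j - f_i with i < j equals p(n) for some n ∈ ℤ. -/
open Polynomial Finset


lemma evalBound (q : Polynomial ℤ) (D : ℕ) (hD : q.natDegree ≤ D) (x : ℤ) :
    |q.eval x| ≤ (∑ i ∈ Finset.range (D+1), |q.coeff i|) * (|x|+1)^D := by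
  rw [Polynomial.eval_eq_sum_range' (lt_of_le_of_lt hD (Nat.lt_succ_self D))]
  refine (Finset.abs_sum_le_sum_abs _ _).trans ?_
  rw [Finset.sum_mul]
  refine Finset.sum_le_sum fun i hi => ?_
  rw [abs_mul, abs_pow]
  have h1 : |x| ^ i ≤ (|x|+1) ^ D := by
    calc |x| ^ i ≤ (|x|+1) ^ i := pow_le_pow_left₀ (abs_nonneg x) (by linarith) i
      _ ≤ (|x|+1)^D := pow_le_pow_right₀ (by linarith [abs_nonneg x]) (by
          simpa using Finset.mem_range_succ_iff.mp hi)
  exact mul_le_mul_of_nonneg_left h1 (abs_nonneg _)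

lemma powdiff_aux (b m : ℤ) (hb : 0 ≤ b) (hbm : b ≤ m) (e : ℕ) :
    (m - b) * m ^ e ≤ m ^ (e+1) - b ^ (e+1) := by
  have h := pow_le_pow_left₀ hb hbm e
  have h2 : b ^ (e+1) = b * b ^ e := by ring
  have h3 : m ^ (e+1) = m * m ^ e := by ring
  nlinarith

lemma powdiff (x y : ℤ) (e : ℕ) :
    |(|x| - |y|)| * max |x| |y| ^ e ≤ |x ^ (e+1) - y ^ (e+1)| := by
  have key : ∀ u v : ℤ, |v| ≤ |u| → |(|u| - |v|)| * max |u| |v| ^ e ≤ |u ^ (e+1) - v^(e+1)| := by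
    intro u v huv
    rw [max_eq_left huv, abs_of_nonneg (by linarith)]
    have h1 : |v|^(e+1) ≤ |u|^(e+1) := pow_le_pow_left₀ (abs_nonneg v) huv _
    have h2 : |(|u^(e+1)| - |v^(e+1)|)| ≤ |u^(e+1) - v^(e+1)| := abs_abs_sub_abs_le_abs_sub _ _
    rw [abs_pow, abs_pow, abs_of_nonneg (by linarith)] at h2
    calc (|u| - |v|) * |u|^e ≤ |u|^(e+1) - |v|^(e+1) := powdiff_aux _ _ (abs_nonneg v) huv e
      _ ≤ _ := h2
  rcases le_total |y| |x| with h | h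
  · exact key x y h
  · rw [abs_sub_comm, max_comm]
    calc _ ≤ |y^(e+1) - x^(e+1)| := key y x h
      _ = _ := abs_sub_comm _ _

lemma pigeon {S : Set ℕ} (hS : S.Infinite) (g : ℕ → ℤ) (T : Finset ℤ)
    (hg : ∀ j ∈ S, g j ∈ T) : ∃ t, {j | j ∈ S ∧ g j = t}.Infinite := by
  by_contra h
  push_neg at h
  have hsub : S ⊆ ⋃ t ∈ T, {j | j ∈ S ∧ g j = t} := fun j hj => by
    simp only [Set.mem_iUnion]
    exact ⟨g j, hg j hj, hj, rfl⟩
  exact hS ((T.finite_toSet.biUnion fun t _ => h t).subset hsub)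

lemma rootsInf (q : Polynomial ℤ) {S : Set ℕ} (hS : S.Infinite) (y : ℕ → ℤ)
    (hinj : Set.InjOn y S) (hroot : ∀ j ∈ S, q.eval (y j) = 0) : q = 0 := by
  apply Polynomial.eq_zero_of_infinite_isRoot
  apply Set.Infinite.mono (s := y '' S)
  · rintro z ⟨j, hj, rfl⟩
    exact hroot j hj
  · exact hS.image hinj

lemma sign_split (x y : ℤ) : |x - y| = |(|x| - |y|)| ∨ |x + y| = |(|x| - |y|)| := by
  rcases le_or_gt 0 x with hx | hx <;> rcases le_or_gt 0 y with hy | hy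
  · left; rw [abs_of_nonneg hx, abs_of_nonneg hy]
  · right; rw [abs_of_nonneg hx, abs_of_neg hy, show x + y = x - -y by ring]
  · right; rw [abs_of_neg hx, abs_of_nonneg hy, show x + y = -(-x - y) by ring, abs_neg]
  · left; rw [abs_of_neg hx, abs_of_neg hy, show x - y = -(-x - -y) by ring, abs_neg]

set_option maxHeartbeats 2000000 in
theorem stmt3 (p : Polynomial ℤ) (hdeg : 2 ≤ p.natDegree) :
    ¬ ∃ f : ℕ → ℤ, StrictMono f ∧
      ∀ i j : ℕ, i < j → ∃ n : ℤ, f j - f i = p.eval n := by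
  rintro ⟨f, hmono, hrep⟩
  -- basic setup
  have hp0 : p ≠ 0 := fun h => by simp [h] at hdeg
  set d := p.natDegree with hd
  set e := d - 1 with he
  have hde : d = e + 1 := by omega
  have he1 : 1 ≤ e := by omega
  set a := p.leadingCoeff with haa
  have ha : a ≠ 0 := Polynomial.leadingCoeff_ne_zero.mpr hp0
  have ha1 : 1 ≤ |a| := Int.one_le_abs (by exact_mod_cast ha)
  set c := f 1 - f 0 with hcc
  have hc : 0 < c := sub_pos.mpr (hmono (by norm_num))
  choose x hx using fun j : ℕ => hrep 0 (j+2) (by omega)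
  choose y hy using fun j : ℕ => hrep 1 (j+2) (by omega)
  have hxy : ∀ j, p.eval (x j) - p.eval (y j) = c := by
    intro j
    rw [← hx j, ← hy j]; ring
  have hxinj : Function.Injective x := by
    intro i j hij
    have h1 := hx i
    have h2 := hx j
    rw [hij, ← h2] at h1
    have : i + 2 = j + 2 := hmono.injective (by linarith)
    omega
  -- decomposition p = r + a * X^d
  set r := p.eraseLead with hr
  have hsplit : ∀ z : ℤ, p.eval z = r.eval z + a * z ^ d := by
    intro z
    conv_lhs => rw [← Polynomial.eraseLead_add_C_mul_X_pow p]
    simp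
    rfl
  set C₁ := ∑ i ∈ Finset.range (e+1), |r.coeff i| with hC₁
  have hC₁0 : 0 ≤ C₁ := Finset.sum_nonneg fun i _ => abs_nonneg _
  have hrB : ∀ z : ℤ, |r.eval z| ≤ C₁ * (|z|+1)^e :=
    fun z => evalBound r e (le_trans (Polynomial.eraseLead_natDegree_le p) (by omega)) z
  -- the bound B
  set B := |c| + 2^d * C₁ with hB
  have hB0 : 0 ≤ B := by positivity
  have hbound : ∀ j, |(|x j| - |y j|)| ≤ B := by
    intro j
    set X := x j
    set Y := y j
    set M := max |X| |Y| with hM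
    have hM0 : 0 ≤ M := le_trans (abs_nonneg X) (le_max_left _ _)
    rcases eq_or_lt_of_le hM0 with hM1 | hM1
    · have h1 : |X| = 0 := le_antisymm (hM1 ▸ le_max_left _ _) (abs_nonneg _)
      have h2 : |Y| = 0 := le_antisymm (hM1 ▸ le_max_right _ _) (abs_nonneg _)
      rw [h1, h2]; simpa using hB0
    · -- M ≥ 1
      have hM1 : 1 ≤ M := hM1
      have hMe1 : 1 ≤ M ^ e := one_le_pow₀ hM1
      have key : |(|X| - |Y|)| * M ^ e ≤ B * M ^ e := by
        have h1 : |(|X| - |Y|)| * M ^ e ≤ |X ^ d - Y ^ d| := by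
          rw [hde]; exact powdiff X Y e
        have h2 : |a| * |X ^ d - Y ^ d| = |c - (r.eval X - r.eval Y)| := by
          rw [← abs_mul]
          congr 1
          have h3 := hxy j
          rw [hsplit X, hsplit Y] at h3
          linear_combination h3
        have h3 : |c - (r.eval X - r.eval Y)| ≤ |c| + |r.eval X| + |r.eval Y| := by
          calc |c - (r.eval X - r.eval Y)| ≤ |c| + |r.eval X - r.eval Y| := abs_sub _ _
            _ ≤ |c| + (|r.eval X| + |r.eval Y|) := by gcongr; exact abs_sub _ _
            _ = _ := by ring
        have h4 := hrB X
        have h5 := hrB Y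
        have h6 : (|X| + 1) ^ e ≤ 2 ^ e * M ^ e := by
          rw [← mul_pow]
          apply pow_le_pow_left₀ (by positivity)
          have : |X| ≤ M := le_max_left _ _
          linarith
        have h7 : (|Y| + 1) ^ e ≤ 2 ^ e * M ^ e := by
          rw [← mul_pow]
          apply pow_le_pow_left₀ (by positivity)
          have : |Y| ≤ M := le_max_right _ _
          linarith
        have h8 : |X ^ d - Y ^ d| ≤ |a| * |X ^ d - Y ^ d| := by
          nlinarith [abs_nonneg (X ^ d - Y ^ d)]
        have h9 : (2:ℤ) ^ d = 2 * 2 ^ e := by rw [hde]; ring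
        have h10 : |c| ≤ |c| * M ^ e := by nlinarith [abs_nonneg c]
        calc |(|X| - |Y|)| * M ^ e ≤ |X ^ d - Y ^ d| := h1
          _ ≤ |a| * |X ^ d - Y ^ d| := h8
          _ = |c - (r.eval X - r.eval Y)| := h2
          _ ≤ |c| + |r.eval X| + |r.eval Y| := h3
          _ ≤ |c| + C₁ * (|X| + 1) ^ e + C₁ * (|Y| + 1) ^ e := by linarith
          _ ≤ |c| * M ^ e + C₁ * (2 ^ e * M ^ e) + C₁ * (2 ^ e * M ^ e) := by
              linarith [mul_le_mul_of_nonneg_left h6 hC₁0, mul_le_mul_of_nonneg_left h7 hC₁0]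
          _ = (|c| + 2 * 2 ^ e * C₁) * M ^ e := by ring
          _ = B * M ^ e := by rw [hB, h9]
      exact le_of_mul_le_mul_right key (by positivity)
  -- growth lemmas shared by the additive case
  have hlow : ∀ z : ℤ, 1 ≤ |z| → |z| * (|z| - 2^e * C₁) ≤ |p.eval z| := by
    intro z hz1
    have h1 : |a * z ^ d| ≤ |p.eval z| + |r.eval z| := by
      have hs := hsplit z
      calc |a * z ^ d| = |p.eval z - r.eval z| := by rw [hs]; ring_nf
        _ ≤ |p.eval z| + |r.eval z| := abs_sub _ _
    have h2 : |z| ^ d ≤ |a * z ^ d| := by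
      rw [abs_mul, abs_pow]
      nlinarith [pow_nonneg (abs_nonneg z) d]
    have h3 := hrB z
    have h4 : (|z| + 1) ^ e ≤ 2 ^ e * |z| ^ e := by
      rw [← mul_pow]
      exact pow_le_pow_left₀ (by positivity) (by linarith) e
    have h5 : |z| ^ d = |z| * |z| ^ e := by rw [hde]; ring
    have h6 : |z| ≤ |z| ^ e := le_self_pow₀ hz1 (by omega)
    rcases le_or_gt (|z| - 2^e * C₁) 0 with hneg | hpos
    · calc |z| * (|z| - 2^e * C₁) ≤ 0 := mul_nonpos_of_nonneg_of_nonpos (abs_nonneg z) hneg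
        _ ≤ |p.eval z| := abs_nonneg _
    · have hA1 := mul_le_mul_of_nonneg_left h4 hC₁0
      have hA2 := mul_le_mul_of_nonneg_right h6 (le_of_lt hpos)
      nlinarith [hA1, hA2, h1, h2, h3, h5]
  -- the additive case is impossible
  have hadd : ∀ t : ℤ, (∀ z : ℤ, p.eval (z + t) = p.eval z + c) → False := by
    intro t hid
    have ht : t ≠ 0 := by
      intro h
      have := hid 0
      rw [h] at this
      simp at this
      omega
    have ht1 : (1:ℤ) ≤ |t| := Int.one_le_abs ht
    have hiter : ∀ k : ℕ, p.eval ((k:ℤ) * t) = p.eval 0 + (k:ℤ) * c := by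
      intro k
      induction k with
      | zero => simp
      | succ k ih =>
        have hcast : ((k+1:ℕ):ℤ) * t = (k:ℤ) * t + t := by push_cast; ring
        rw [hcast, hid, ih]
        push_cast; ring
    have hEC : (0:ℤ) ≤ 2^e * C₁ := mul_nonneg (by positivity) hC₁0
    obtain ⟨K, hKval⟩ : ∃ K : ℕ, (K:ℤ) = 2^e * C₁ + c + |p.eval 0| + 1 :=
      ⟨(2^e * C₁ + c + |p.eval 0| + 1).toNat,
        Int.toNat_of_nonneg (by linarith [abs_nonneg (p.eval 0)])⟩
    have hK1 : (1:ℤ) ≤ (K:ℤ) := by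
      rw [hKval]
      linarith [abs_nonneg (p.eval 0)]
    obtain ⟨z, hz⟩ : ∃ z : ℤ, z = (K:ℤ) * t := ⟨_, rfl⟩
    have hzabs : (K:ℤ) ≤ |z| := by
      rw [hz, abs_mul, abs_of_nonneg (show (0:ℤ) ≤ (K:ℤ) from Nat.cast_nonneg K)]
      have := mul_le_mul_of_nonneg_left ht1 (show (0:ℤ) ≤ (K:ℤ) from Nat.cast_nonneg K)
      linarith
    have hl := hlow z (by linarith)
    have hup : |p.eval z| ≤ |p.eval 0| + (K:ℤ) * c := by
      rw [hz, hiter K]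
      calc |p.eval 0 + (K:ℤ) * c| ≤ |p.eval 0| + |(K:ℤ) * c| := abs_add_le _ _
        _ = |p.eval 0| + (K:ℤ) * c := by
            rw [abs_mul, abs_of_nonneg (show (0:ℤ) ≤ (K:ℤ) from Nat.cast_nonneg K), abs_of_pos hc]
    -- contradiction
    have hfac : c + |p.eval 0| + 1 ≤ |z| - 2^e * C₁ := by
      have h := hzabs
      rw [hKval] at h
      linarith
    have hprod : (K:ℤ) * (c + |p.eval 0| + 1) ≤ |z| * (|z| - 2^e * C₁) :=
      mul_le_mul hzabs hfac (by linarith [abs_nonneg (p.eval 0)]) (abs_nonneg z)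
    have h9 : (K:ℤ) * (c + |p.eval 0| + 1) = (K:ℤ) * c + (K:ℤ) * (|p.eval 0| + 1) := by ring
    have h10 : |p.eval 0| + 1 ≤ (K:ℤ) * (|p.eval 0| + 1) :=
      le_mul_of_one_le_left (by linarith [abs_nonneg (p.eval 0)]) hK1
    linarith
  -- pigeonhole over the two kinds of bounded combinations
  set A := {j : ℕ | |x j - y j| ≤ B} with hA
  rcases A.finite_or_infinite with hAf | hAi
  · -- symmetric case: x j + y j bounded off A
    have hAc : Aᶜ.Infinite := hAf.infinite_compl
    have habs : ∀ j ∈ Aᶜ, x j + y j ∈ Finset.Icc (-B) B := by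
      intro j hj
      rcases sign_split (x j) (y j) with h | h
      · exact absurd (show j ∈ A from by
          simp only [hA, Set.mem_setOf_eq, h]; exact hbound j) hj
      · refine Finset.mem_Icc.mpr (abs_le.mp ?_)
        rw [h]; exact hbound j
    obtain ⟨t, hT⟩ := pigeon hAc (fun j => x j + y j) (Finset.Icc (-B) B) habs
    have hyinj : Set.InjOn y {j | j ∈ Aᶜ ∧ x j + y j = t} := by
      intro i hi j hj hij
      apply hxinj
      have h1 : x i = t - y i := by have := hi.2; linarith
      have h2 : x j = t - y j := by have := hj.2; linarith
      rw [h1, h2, hij]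
    have hq : p.comp (Polynomial.C t - Polynomial.X) - p - Polynomial.C c = 0 := by
      apply rootsInf _ hT y hyinj
      intro j hj
      simp only [Polynomial.eval_sub, Polynomial.eval_comp, Polynomial.eval_add,
        Polynomial.eval_X, Polynomial.eval_C]
      have h1 : t - y j = x j := by have := hj.2; linarith
      rw [h1]
      have := hxy j
      linarith
    have hid : ∀ z : ℤ, p.eval (t - z) = p.eval z + c := by
      intro z
      have h := congrArg (Polynomial.eval z) hq
      simp only [Polynomial.eval_sub, Polynomial.eval_comp, Polynomial.eval_add,
        Polynomial.eval_X, Polynomial.eval_C, Polynomial.eval_zero] at h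
      linarith
    have h1 := hid 0
    have h2 := hid t
    simp only [sub_zero, sub_self] at h1 h2
    linarith
  · -- additive case: x j - y j bounded on A
    have habs : ∀ j ∈ A, x j - y j ∈ Finset.Icc (-B) B := by
      intro j hj
      exact Finset.mem_Icc.mpr (abs_le.mp hj)
    obtain ⟨t, hT⟩ := pigeon hAi (fun j => x j - y j) (Finset.Icc (-B) B) habs
    have hyinj : Set.InjOn y {j | j ∈ A ∧ x j - y j = t} := by
      intro i hi j hj hij
      apply hxinj
      have h1 : x i = y i + t := by have := hi.2; linarith
      have h2 : x j = y j + t := by have := hj.2; linarith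
      rw [h1, h2, hij]
    have hq : p.comp (Polynomial.X + Polynomial.C t) - p - Polynomial.C c = 0 := by
      apply rootsInf _ hT y hyinj
      intro j hj
      simp only [Polynomial.eval_sub, Polynomial.eval_comp, Polynomial.eval_add,
        Polynomial.eval_X, Polynomial.eval_C]
      have h1 : y j + t = x j := by have := hj.2; linarith
      rw [h1]
      have := hxy j
      linarith
    apply hadd t
    intro z
    have h := congrArg (Polynomial.eval z) hq
    simp only [Polynomial.eval_sub, Polynomial.eval_comp, Polynomial.eval_add,
      Polynomial.eval_X, Polynomial.eval_C, Polynomial.eval_zero] at h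
    linarith
end

section
/- Let p be an integral polynomial with p(0) = 0. If A is syndetic in ℤ, then the set {(m,n) ∈ ℤ² : m + p(n) ∈ A} is syndetic in ℤ². -/
/-- `A` is thick: every finite set has a translate inside `A`. -/
def Thick {M : Type*} [AddCommMonoid M] (A : Set M) : Prop :=
  ∀ F : Finset M, ∃ s : M, ∀ f ∈ F, f + s ∈ A

/-- `A` is syndetic: finitely many translates of `A` cover the semigroup. -/
def Syndetic {M : Type*} [AddCommMonoid M] (A : Set M) : Prop :=
  ∃ F : Finset M, ∀ x : M, ∃ s ∈ F, s + x ∈ A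

theorem stmt6 (p : Polynomial ℤ) (h0 : p.eval 0 = 0) (A : Set ℤ) (hA : Syndetic A) :
    Syndetic {q : ℤ × ℤ | q.1 + p.eval q.2 ∈ A} := by
  obtain ⟨F, hF⟩ := hA
  refine ⟨F.image (fun s => (s, 0)), fun x => ?_⟩
  obtain ⟨s, hs, hsA⟩ := hF (x.1 + p.eval x.2)
  exact ⟨(s, 0), Finset.mem_image_of_mem _ hs, by
    simp only [Set.mem_setOf_eq, Prod.fst_add, Prod.snd_add, zero_add]
    rw [add_assoc]; exact hsA⟩
end

section
/- Let p be an integral polynomial with p(0) = 0 whose leading coefficient is positive. If A is syndetic in ℕ, then {(m,n) ∈ ℕ² : m + p(n) ∈ A} is syndetic in ℕ². -/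
/-- A polynomial with positive leading coefficient is bounded below on ℕ. -/
lemma exists_lower_bound (p : Polynomial ℤ) (h0 : p.eval 0 = 0)
    (hlead : 0 < p.leadingCoeff) :
    ∃ C : ℕ, ∀ n : ℕ, 0 ≤ p.eval (n : ℤ) + (C : ℤ) := by
  have hp0 : p ≠ 0 := fun h => by simp [h, Polynomial.leadingCoeff_zero] at hlead
  have hdeg : 0 < p.degree := by
    rcases lt_or_ge 0 p.degree with h | h
    · exact h
    · exfalso
      have := Polynomial.eq_C_of_degree_le_zero h
      rw [this] at h0
      simp at h0
      rw [this, h0] at hp0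
      simp at hp0
  set P : Polynomial ℝ := p.map (Int.castRingHom ℝ) with hP
  have hdegP : P.degree = p.degree :=
    Polynomial.degree_map_eq_of_injective Int.cast_injective p
  have hleadP : 0 ≤ P.leadingCoeff := by
    rw [hP, Polynomial.leadingCoeff_map_of_injective (f := Int.castRingHom ℝ) Int.cast_injective]
    simp only [Int.coe_castRingHom]; exact_mod_cast hlead.le
  have htend : Filter.Tendsto (fun x => P.eval x) Filter.atTop Filter.atTop :=
    Polynomial.tendsto_atTop_of_leadingCoeff_nonneg P (hdegP ▸ hdeg) hleadP
  have hev := htend.eventually_ge_atTop 0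
  rw [Filter.eventually_atTop] at hev
  obtain ⟨x₀, hx₀⟩ := hev
  obtain ⟨N, hN⟩ := exists_nat_ge x₀
  refine ⟨∑ n ∈ Finset.range (N + 1), (-(p.eval (n : ℤ))).toNat, fun n => ?_⟩
  rcases le_or_gt n N with h | h
  · have hmem : n ∈ Finset.range (N + 1) := Finset.mem_range.mpr (by omega)
    have hle : (-(p.eval (n : ℤ))).toNat ≤
        ∑ m ∈ Finset.range (N + 1), (-(p.eval (m : ℤ))).toNat :=
      Finset.single_le_sum (f := fun m : ℕ => (-(p.eval (m : ℤ))).toNat) (fun _ _ => Nat.zero_le _) hmem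
    have h1 : -(p.eval (n : ℤ)) ≤ ((-(p.eval (n : ℤ))).toNat : ℤ) := Int.self_le_toNat _
    have h2 : ((-(p.eval (n : ℤ))).toNat : ℤ) ≤
        ((∑ m ∈ Finset.range (N + 1), (-(p.eval (m : ℤ))).toNat : ℕ) : ℤ) := by
      exact_mod_cast hle
    omega
  · have hx : x₀ ≤ (n : ℝ) := hN.trans (by exact_mod_cast Nat.cast_le.mpr h.le)
    have := hx₀ (n : ℝ) hx
    have heval : P.eval ((n : ℤ) : ℝ) = ((p.eval (n : ℤ) : ℤ) : ℝ) :=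
      Polynomial.eval_intCast_map (Int.castRingHom ℝ) p (n : ℤ)
    push_cast at heval
    rw [heval] at this
    have : (0 : ℤ) ≤ p.eval (n : ℤ) := by exact_mod_cast this
    positivity

theorem stmt8 (p : Polynomial ℤ) (h0 : p.eval 0 = 0) (hlead : 0 < p.leadingCoeff)
    (A : Set ℕ) (hA : Syndetic A) :
    Syndetic {q : ℕ × ℕ |
      ((q.1 : ℤ) + p.eval (q.2 : ℤ)) ∈ (((↑) : ℕ → ℤ) '' A)} := by
  obtain ⟨C, hC⟩ := exists_lower_bound p h0 hlead
  obtain ⟨F, hF⟩ := hA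
  refine ⟨F.image (fun s => (s + C, 0)), fun x => ?_⟩
  obtain ⟨m, n⟩ := x
  have hnn : 0 ≤ (m : ℤ) + p.eval (n : ℤ) + (C : ℤ) := by
    have := hC n; omega
  set k : ℕ := ((m : ℤ) + p.eval (n : ℤ) + (C : ℤ)).toNat with hk
  have hkZ : (k : ℤ) = (m : ℤ) + p.eval (n : ℤ) + (C : ℤ) := Int.toNat_of_nonneg hnn
  obtain ⟨s, hsF, hsA⟩ := hF k
  refine ⟨(s + C, 0), Finset.mem_image_of_mem _ hsF, ?_⟩
  refine ⟨s + k, hsA, ?_⟩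
  show ((s + k : ℕ) : ℤ) = (((s + C, 0) + (m, n) : ℕ × ℕ).1 : ℤ) +
    p.eval ((((s + C, 0) + (m, n) : ℕ × ℕ).2 : ℕ) : ℤ)
  simp only [Prod.fst_add, Prod.snd_add]
  push_cast [hkZ]
  ring
end

section
/- Let p be an integral polynomial with p(0) = 0 whose leading coefficient is negative (and degree at least 1). Then there exists a syndetic set A in ℕ such that {(m,n) ∈ ℕ² : m + p(n) ∈ A} is not syndetic in ℕ². In fact, for every syndetic A ⊆ ℕ this set fails to be syndetic, since it is disjoint from a thick subset of ℕ² of the form ∪_{N∈ℕ} [n_N + 1, ∞) × [0, N]. -/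
theorem stmt9 (p : Polynomial ℤ) (h0 : p.eval 0 = 0) (hdeg : 1 ≤ p.natDegree)
    (hlead : p.leadingCoeff < 0) (A : Set ℕ) (hA : Syndetic A) :
    (∃ T : Set (ℕ × ℕ), Thick T ∧
      Disjoint T {q : ℕ × ℕ | ((q.1 : ℤ) + p.eval (q.2 : ℤ)) ∈ (((↑) : ℕ → ℤ) '' A)}) ∧
    ¬ Syndetic {q : ℕ × ℕ | ((q.1 : ℤ) + p.eval (q.2 : ℤ)) ∈ (((↑) : ℕ → ℤ) '' A)} := by
  set S : Set (ℕ × ℕ) :=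
    {q : ℕ × ℕ | ((q.1 : ℤ) + p.eval (q.2 : ℤ)) ∈ (((↑) : ℕ → ℤ) '' A)} with hS
  -- p.eval tends to -∞ along ℕ
  have hq : Filter.Tendsto (fun n : ℕ => p.eval (n : ℤ)) Filter.atTop Filter.atBot := by
    set q : Polynomial ℝ := p.map (Int.castRingHom ℝ) with hqdef
    have hqdeg : q.degree = p.degree :=
      Polynomial.degree_map_eq_of_injective Int.cast_injective p
    have hdpos : 0 < q.degree := by
      rw [hqdeg]; exact Polynomial.natDegree_pos_iff_degree_pos.mp hdeg
    have hqlead : q.leadingCoeff ≤ 0 := by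
      have hne : (Int.castRingHom ℝ) p.leadingCoeff ≠ 0 := by
        simpa using hlead.ne
      have : q.leadingCoeff = (p.leadingCoeff : ℝ) :=
        Polynomial.leadingCoeff_map_of_leadingCoeff_ne_zero _ hne
      rw [this]
      exact_mod_cast hlead.le
    have h1 : Filter.Tendsto (fun x : ℝ => q.eval x) Filter.atTop Filter.atBot :=
      Polynomial.tendsto_atBot_of_leadingCoeff_nonpos q hdpos hqlead
    have h2 : Filter.Tendsto (fun n : ℕ => q.eval (n : ℝ)) Filter.atTop Filter.atBot :=
      h1.comp tendsto_natCast_atTop_atTop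
    have h3 : ∀ n : ℕ, q.eval (n : ℝ) = ((p.eval (n : ℤ) : ℤ) : ℝ) := by
      intro n
      rw [hqdef, Polynomial.eval_natCast_map]
      simp
    rw [Filter.tendsto_atBot] at h2 ⊢
    intro b
    filter_upwards [h2 (b : ℝ)] with n hn
    rw [h3 n] at hn
    exact_mod_cast hn
  set T : Set (ℕ × ℕ) := {q : ℕ × ℕ | (q.1 : ℤ) + p.eval (q.2 : ℤ) < 0} with hT
  have hdisj : Disjoint T S := by
    rw [Set.disjoint_left]
    rintro ⟨m, n⟩ hm ⟨a, _, ha⟩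
    simp only [hT, hS, Set.mem_setOf_eq] at hm ha
    omega
  have hthick : Thick T := by
    intro F
    set M : ℕ := F.sup Prod.fst with hM
    obtain ⟨N, hN⟩ := (Filter.tendsto_atBot.mp hq) (-(M : ℤ) - 1) |>.exists_forall_of_atTop
    refine ⟨(0, N), ?_⟩
    rintro ⟨m, n⟩ hf
    have h1 : m ≤ M := Finset.le_sup (f := Prod.fst) hf
    have h2 : p.eval ((n + N : ℕ) : ℤ) ≤ -(M : ℤ) - 1 := hN (n + N) (Nat.le_add_left _ _)
    show ((m + 0 : ℕ) : ℤ) + p.eval ((n + N : ℕ) : ℤ) < 0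
    omega
  refine ⟨⟨T, hthick, hdisj⟩, ?_⟩
  rintro ⟨F, hF⟩
  obtain ⟨s, hs⟩ := hthick F
  obtain ⟨f, hfF, hfS⟩ := hF s
  exact Set.disjoint_left.mp hdisj (hs f hfF) hfS
end

section
/- Let p be an integral polynomial with p(0) = 0 and deg p ≥ 2 with positive leading coefficient. Then there exists an IP*-set A ⊆ ℕ such that the set {(m,n) ∈ ℕ² : m + p(n) ∈ A} is not an IP*-set in ℕ². Concretely, with (m_i, n_i) = (2^{iN}, 2^{iN}) for suitable N and S = {p(n_{i_1} + ... + n_{i_k}) + m_{i_1} + ... + m_{i_k} : i_1 < ... < i_k, k ∈ ℕ}, the set A = ℕ \ S works, since FS({(m_i, n_i)}) is disjoint from {(m,n) : m + p(n) ∈ A}. -/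
lemma powDiff_le (x y : ℤ) (hy : 0 ≤ y) (hxy : y ≤ x) (k : ℕ) :
    x ^ k - y ^ k ≤ k * x ^ (k - 1) * (x - y) := by
  rw [← geom_sum₂_mul x y k]
  have hx : 0 ≤ x := hy.trans hxy
  have h1 : (∑ i ∈ Finset.range k, x ^ i * y ^ (k - 1 - i)) ≤ k * x ^ (k-1) := by
    calc (∑ i ∈ Finset.range k, x ^ i * y ^ (k - 1 - i))
        ≤ ∑ i ∈ Finset.range k, x ^ (k-1) := by
          apply Finset.sum_le_sum
          intro i hi
          simp only [Finset.mem_range] at hi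
          calc x ^ i * y ^ (k-1-i) ≤ x ^ i * x ^ (k-1-i) := by
                apply mul_le_mul_of_nonneg_left (pow_le_pow_left₀ hy hxy _) (pow_nonneg hx _)
            _ = x ^ (k-1) := by rw [← pow_add]; congr 1; omega
      _ = k * x ^ (k-1) := by simp [mul_comm]
  exact mul_le_mul_of_nonneg_right h1 (by linarith)

lemma powDiff_ge (x y : ℤ) (hy : 0 ≤ y) (hxy : y ≤ x) (k : ℕ) :
    (k : ℤ) * y ^ (k - 1) * (x - y) ≤ x ^ k - y ^ k := by
  rw [← geom_sum₂_mul x y k]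
  have hx : 0 ≤ x := hy.trans hxy
  have h1 : (k : ℤ) * y ^ (k-1) ≤ ∑ i ∈ Finset.range k, x ^ i * y ^ (k - 1 - i) := by
    calc (k : ℤ) * y ^ (k-1) = ∑ i ∈ Finset.range k, y ^ (k-1) := by simp [mul_comm]
      _ ≤ ∑ i ∈ Finset.range k, x ^ i * y ^ (k - 1 - i) := by
          apply Finset.sum_le_sum
          intro i hi
          simp only [Finset.mem_range] at hi
          calc y ^ (k-1) = y ^ i * y ^ (k-1-i) := by rw [← pow_add]; congr 1; omega
            _ ≤ x ^ i * y ^ (k-1-i) := by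
                apply mul_le_mul_of_nonneg_right (pow_le_pow_left₀ hy hxy _) (pow_nonneg hy _)
  exact mul_le_mul_of_nonneg_right h1 (by linarith)


noncomputable def AZ (p : Polynomial ℤ) : ℤ := ∑ k ∈ Finset.range p.natDegree, |p.coeff k|

lemma Lg0 (p : Polynomial ℤ) (hdeg : 2 ≤ p.natDegree) (hlead : 0 < p.leadingCoeff)
    (x : ℤ) (hx : 1 ≤ x) :
    x ^ (p.natDegree - 1) * (x - AZ p) ≤ p.eval x := by
  set d := p.natDegree with hd
  have hx0 : (0:ℤ) ≤ x := by linarith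
  rw [Polynomial.eval_eq_sum_range, Finset.sum_range_succ]
  have hc : p.coeff d = p.leadingCoeff := rfl
  have h1 : x ^ (d-1) * x ≤ p.coeff d * x ^ d := by
    rw [hc]
    calc x ^ (d-1) * x = x ^ d := by rw [← pow_succ]; congr 1; omega
      _ = 1 * x ^ d := by ring
      _ ≤ p.leadingCoeff * x ^ d := by
          apply mul_le_mul_of_nonneg_right (by omega) (pow_nonneg hx0 _)
  have h2 : -(AZ p * x ^ (d-1)) ≤ ∑ i ∈ Finset.range d, p.coeff i * x ^ i := by
    rw [AZ, Finset.sum_mul, ← Finset.sum_neg_distrib]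
    apply Finset.sum_le_sum
    intro i hi
    simp only [Finset.mem_range] at hi
    have hpow : x ^ i ≤ x ^ (d-1) := pow_le_pow_right₀ hx (by omega)
    have : |p.coeff i * x ^ i| ≤ |p.coeff i| * x ^ (d-1) := by
      rw [abs_mul, abs_of_nonneg (pow_nonneg hx0 i)]
      exact mul_le_mul_of_nonneg_left hpow (abs_nonneg _)
    nlinarith [neg_abs_le (p.coeff i * x ^ i)]
  linarith [add_le_add h2 h1]

lemma AZ_nonneg (p : Polynomial ℤ) : 0 ≤ AZ p :=
  Finset.sum_nonneg fun _ _ => abs_nonneg _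

lemma eval_sub_eval (p : Polynomial ℤ) (u v : ℤ) :
    p.eval u - p.eval v = ∑ i ∈ Finset.range (p.natDegree + 1), p.coeff i * (u ^ i - v ^ i) := by
  rw [Polynomial.eval_eq_sum_range u, Polynomial.eval_eq_sum_range v, ← Finset.sum_sub_distrib]
  exact Finset.sum_congr rfl fun i _ => by ring

lemma Lg2 (p : Polynomial ℤ) (hdeg : 2 ≤ p.natDegree) (hlead : 0 < p.leadingCoeff)
    (x : ℤ) (hx : 1 ≤ x) :
    (p.natDegree : ℤ) * x ^ (p.natDegree - 2) * (x - 2 ^ p.natDegree * AZ p)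
      ≤ p.eval (x + 1) - p.eval x := by
  set d := p.natDegree with hd
  have hx0 : (0:ℤ) ≤ x := by linarith
  rw [eval_sub_eval, Finset.sum_range_succ]
  have hc : p.coeff d = p.leadingCoeff := rfl
  -- top term
  have htop : (d:ℤ) * x ^ (d-1) ≤ p.coeff d * ((x+1)^d - x^d) := by
    have h1 := powDiff_ge (x+1) x hx0 (by linarith) d
    have h2 : (0:ℤ) ≤ (x+1)^d - x^d := by
      have := powDiff_ge (x+1) x hx0 (by linarith) d
      nlinarith [pow_nonneg hx0 (d-1), Nat.cast_nonneg (α := ℤ) d]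
    calc (d:ℤ) * x ^ (d-1) = (d:ℤ) * x ^ (d-1) * ((x+1) - x) := by ring
      _ ≤ (x+1)^d - x^d := h1
      _ = 1 * ((x+1)^d - x^d) := by ring
      _ ≤ p.coeff d * ((x+1)^d - x^d) := by
          apply mul_le_mul_of_nonneg_right (by rw [hc]; omega) h2
  -- lower terms
  have hrest : -(AZ p * ((d:ℤ) * 2^d * x^(d-2)))
      ≤ ∑ i ∈ Finset.range d, p.coeff i * ((x+1)^i - x^i) := by
    rw [AZ, Finset.sum_mul, ← Finset.sum_neg_distrib]
    apply Finset.sum_le_sum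
    intro i hi
    simp only [Finset.mem_range] at hi
    have hdiff0 : (0:ℤ) ≤ (x+1)^i - x^i :=
      sub_nonneg.mpr (pow_le_pow_left₀ hx0 (by linarith) i)
    have hdiffle : (x+1)^i - x^i ≤ (d:ℤ) * 2^d * x^(d-2) := by
      have h1 := powDiff_le (x+1) x hx0 (by linarith) i
      have h2 : (x+1)^(i-1) ≤ (x+1)^(d-2) := pow_le_pow_right₀ (by linarith) (by omega)
      have h3 : (x+1)^(d-2) ≤ (2*x)^(d-2) := pow_le_pow_left₀ (by linarith) (by linarith) _
      have h4 : ((2:ℤ)*x)^(d-2) = 2^(d-2) * x^(d-2) := mul_pow 2 x (d-2)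
      have h5 : (2:ℤ)^(d-2) ≤ 2^d := pow_le_pow_right₀ (by norm_num) (by omega)
      have h6 : (0:ℤ) ≤ x^(d-2) := pow_nonneg hx0 _
      have h7 : (i:ℤ) ≤ (d:ℤ) := by exact_mod_cast Nat.le_of_lt hi
      have h8 : (0:ℤ) ≤ (x+1)^(i-1) := pow_nonneg (by linarith) _
      calc (x+1)^i - x^i ≤ ↑i * (x+1)^(i-1) * ((x+1) - x) := h1
        _ = ↑i * (x+1)^(i-1) := by ring
        _ ≤ ↑d * (x+1)^(d-2) := mul_le_mul h7 h2 h8 (Nat.cast_nonneg d)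
        _ ≤ ↑d * (2^(d-2) * x^(d-2)) := by
            rw [← h4]; exact mul_le_mul_of_nonneg_left h3 (Nat.cast_nonneg d)
        _ ≤ ↑d * (2^d * x^(d-2)) :=
            mul_le_mul_of_nonneg_left (mul_le_mul_of_nonneg_right h5 h6) (Nat.cast_nonneg d)
        _ = ↑d * 2^d * x^(d-2) := by ring
    have habs : |p.coeff i * ((x+1)^i - x^i)| ≤ |p.coeff i| * ((d:ℤ) * 2^d * x^(d-2)) := by
      rw [abs_mul, abs_of_nonneg hdiff0]
      exact mul_le_mul_of_nonneg_left hdiffle (abs_nonneg _)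
    nlinarith [neg_abs_le (p.coeff i * ((x+1)^i - x^i))]
  have hsplit : (d:ℤ) * x^(d-2) * (x - 2^d * AZ p)
      = -(AZ p * ((d:ℤ) * 2^d * x^(d-2))) + (d:ℤ) * (x^(d-2) * x) := by ring
  have hxp : x^(d-2) * x = x^(d-1) := by rw [← pow_succ]; congr 1; omega
  rw [hsplit, hxp]
  exact add_le_add hrest htop

lemma Lg3 (p : Polynomial ℤ) (hdeg : 2 ≤ p.natDegree) (hlead : 0 < p.leadingCoeff)
    (t e : ℤ) (ht : 1 ≤ t) (he : 0 ≤ e) (het : e ≤ t) :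
    p.eval (t + e) - p.eval t
      ≤ (AZ p + p.leadingCoeff) * ((p.natDegree : ℤ) * 2 ^ p.natDegree * t ^ (p.natDegree - 1) * e) := by
  set d := p.natDegree with hd
  have ht0 : (0:ℤ) ≤ t := by linarith
  rw [eval_sub_eval]
  have key : ∀ i ∈ Finset.range (d+1),
      p.coeff i * ((t+e)^i - t^i) ≤ |p.coeff i| * ((d:ℤ) * 2^d * t^(d-1) * e) := by
    intro i hi
    simp only [Finset.mem_range] at hi
    have hdiff0 : (0:ℤ) ≤ (t+e)^i - t^i :=
      sub_nonneg.mpr (pow_le_pow_left₀ ht0 (by linarith) i)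
    have hdiffle : (t+e)^i - t^i ≤ (d:ℤ) * 2^d * t^(d-1) * e := by
      have h1 := powDiff_le (t+e) t ht0 (by linarith) i
      have h2 : (t+e)^(i-1) ≤ (t+e)^(d-1) := pow_le_pow_right₀ (by linarith) (by omega)
      have h3 : (t+e)^(d-1) ≤ (2*t)^(d-1) := pow_le_pow_left₀ (by linarith) (by linarith) _
      have h4 : ((2:ℤ)*t)^(d-1) = 2^(d-1) * t^(d-1) := mul_pow 2 t (d-1)
      have h5 : (2:ℤ)^(d-1) ≤ 2^d := pow_le_pow_right₀ (by norm_num) (by omega)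
      have h6 : (0:ℤ) ≤ t^(d-1) := pow_nonneg ht0 _
      have h7 : (i:ℤ) ≤ (d:ℤ) := by exact_mod_cast Nat.lt_succ_iff.mp hi
      have h8 : (0:ℤ) ≤ (t+e)^(i-1) := pow_nonneg (by linarith) _
      calc (t+e)^i - t^i ≤ ↑i * (t+e)^(i-1) * ((t+e) - t) := h1
        _ = (↑i * (t+e)^(i-1)) * e := by ring
        _ ≤ (↑d * (t+e)^(d-1)) * e := by
            apply mul_le_mul_of_nonneg_right (mul_le_mul h7 h2 h8 (Nat.cast_nonneg d)) he
        _ ≤ (↑d * (2^(d-1) * t^(d-1))) * e := by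
            rw [← h4]
            exact mul_le_mul_of_nonneg_right
              (mul_le_mul_of_nonneg_left h3 (Nat.cast_nonneg d)) he
        _ ≤ (↑d * (2^d * t^(d-1))) * e := by
            apply mul_le_mul_of_nonneg_right
              (mul_le_mul_of_nonneg_left (mul_le_mul_of_nonneg_right h5 h6) (Nat.cast_nonneg d)) he
        _ = ↑d * 2^d * t^(d-1) * e := by ring
    calc p.coeff i * ((t+e)^i - t^i) ≤ |p.coeff i| * ((t+e)^i - t^i) := by
          apply mul_le_mul_of_nonneg_right (le_abs_self _) hdiff0
      _ ≤ |p.coeff i| * ((d:ℤ) * 2^d * t^(d-1) * e) := by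
          apply mul_le_mul_of_nonneg_left hdiffle (abs_nonneg _)
  calc (∑ i ∈ Finset.range (d+1), p.coeff i * ((t+e)^i - t^i))
      ≤ ∑ i ∈ Finset.range (d+1), |p.coeff i| * ((d:ℤ) * 2^d * t^(d-1) * e) :=
        Finset.sum_le_sum key
    _ = (∑ i ∈ Finset.range (d+1), |p.coeff i|) * ((d:ℤ) * 2^d * t^(d-1) * e) := by
        rw [Finset.sum_mul]
    _ = (AZ p + p.leadingCoeff) * ((d:ℤ) * 2^d * t^(d-1) * e) := by
        rw [Finset.sum_range_succ, AZ]
        congr 2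
        exact abs_of_pos hlead

/-- the key function `g x = x + p(x)`. -/
def gI (p : Polynomial ℤ) (x : ℤ) : ℤ := x + p.eval x

noncomputable def An (p : Polynomial ℤ) : ℕ := ∑ k ∈ Finset.range p.natDegree, (p.coeff k).natAbs

lemma An_cast (p : Polynomial ℤ) : ((An p : ℕ) : ℤ) = AZ p := by
  unfold An AZ
  push_cast [Int.natCast_natAbs]
  rfl

/-- max bound for `g` on `[0,e]`. -/
noncomputable def Mn (p : Polynomial ℤ) (e : ℕ) : ℕ :=
  ∑ u ∈ Finset.range (e + 1), (gI p u).toNat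

lemma Mn_bound (p : Polynomial ℤ) {e u : ℕ} (h : u ≤ e) : gI p u ≤ (Mn p e : ℤ) := by
  have h1 : (gI p u).toNat ≤ Mn p e :=
    Finset.single_le_sum (f := fun u : ℕ => (gI p u).toNat) (fun _ _ => Nat.zero_le _)
      (Finset.mem_range.mpr (by omega))
  calc gI p u ≤ ((gI p u).toNat : ℤ) := Int.self_le_toNat _
    _ ≤ (Mn p e : ℤ) := by exact_mod_cast h1

noncomputable def phi (p : Polynomial ℤ) (e : ℕ) : ℕ :=
  1 + e + 2 ^ p.natDegree * An p + 2 * Mn p e + An p + e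
    + (An p + p.leadingCoeff.toNat) * p.natDegree * e * 2 ^ p.natDegree

lemma phi_cast (p : Polynomial ℤ) (hlead : 0 < p.leadingCoeff) (e : ℕ) :
    ((phi p e : ℕ) : ℤ) = 1 + e + 2 ^ p.natDegree * AZ p + 2 * (Mn p e) + AZ p + e
      + (AZ p + p.leadingCoeff) * p.natDegree * e * 2 ^ p.natDegree := by
  have h1 := An_cast p
  have h2 : ((p.leadingCoeff.toNat : ℕ) : ℤ) = p.leadingCoeff := Int.toNat_of_nonneg hlead.le
  unfold phi
  push_cast [h1, h2]
  ring

noncomputable def EE (p : Polynomial ℤ) : ℕ → ℕ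
  | 0 => 0
  | j + 1 => EE p j + phi p (EE p j)

noncomputable def tt (p : Polynomial ℤ) (j : ℕ) : ℕ := phi p (EE p j)

lemma EE_succ (p : Polynomial ℤ) (j : ℕ) : EE p (j + 1) = EE p j + tt p j := rfl

lemma EE_mono (p : Polynomial ℤ) : Monotone (EE p) :=
  monotone_nat_of_le_succ fun j => by rw [EE_succ]; omega

lemma EE_eq_sum (p : Polynomial ℤ) (j : ℕ) : EE p j = ∑ i ∈ Finset.range j, tt p i := by
  induction j with
  | zero => rfl
  | succ j ih => rw [EE_succ, Finset.sum_range_succ, ih]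

section Facts
variable (p : Polynomial ℤ) (hdeg : 2 ≤ p.natDegree) (hlead : 0 < p.leadingCoeff)
include hdeg hlead

lemma tt_facts (j : ℕ) :
    1 + (EE p j : ℤ) ≤ (tt p j : ℤ) ∧
    2 ^ p.natDegree * AZ p + (Mn p (EE p j) : ℤ) ≤ (tt p j : ℤ) ∧
    2 * (Mn p (EE p j) : ℤ) + 1 ≤ (tt p j : ℤ) ∧
    AZ p ≤ (tt p j : ℤ) ∧
    AZ p + (1 + (EE p j : ℤ)
      + (AZ p + p.leadingCoeff) * p.natDegree * (EE p j) * 2 ^ p.natDegree) ≤ (tt p j : ℤ) := by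
  have hA := AZ_nonneg p
  have hc : (1:ℤ) ≤ p.leadingCoeff := hlead
  have hM : (0:ℤ) ≤ (Mn p (EE p j) : ℤ) := Int.natCast_nonneg _
  have he : (0:ℤ) ≤ (EE p j : ℤ) := Int.natCast_nonneg _
  have hp2 : (0:ℤ) ≤ 2 ^ p.natDegree * AZ p := by positivity
  have hprod : (0:ℤ) ≤ (AZ p + p.leadingCoeff) * p.natDegree * (EE p j) * 2 ^ p.natDegree := by
    have : (0:ℤ) ≤ AZ p + p.leadingCoeff := by linarith
    positivity
  have hphi := phi_cast p hlead (EE p j)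
  have htt : (tt p j : ℤ) = ((phi p (EE p j) : ℕ) : ℤ) := rfl
  rw [hphi] at htt
  refine ⟨by linarith, by linarith, by linarith, by linarith, by linarith⟩

lemma F2 (j : ℕ) (x : ℤ) (hx : (tt p j : ℤ) ≤ x) :
    gI p x + (Mn p (EE p j) : ℤ) < gI p (x + 1) := by
  obtain ⟨h1, h2, h3, h4, h5⟩ := tt_facts p hdeg hlead j
  have he : (0:ℤ) ≤ (EE p j : ℤ) := Int.natCast_nonneg _
  have hM : (0:ℤ) ≤ (Mn p (EE p j) : ℤ) := Int.natCast_nonneg _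
  have hx1 : (1:ℤ) ≤ x := by linarith
  have hLg2 := Lg2 p hdeg hlead x hx1
  have hd1 : (1:ℤ) ≤ (p.natDegree : ℤ) := by exact_mod_cast Nat.one_le_of_lt hdeg
  have hpow : (1:ℤ) ≤ x ^ (p.natDegree - 2) := one_le_pow₀ hx1
  have hxa : (Mn p (EE p j) : ℤ) ≤ x - 2 ^ p.natDegree * AZ p := by linarith
  have hnn : (0:ℤ) ≤ x - 2 ^ p.natDegree * AZ p := by linarith
  have step1 : x - 2 ^ p.natDegree * AZ p ≤ x ^ (p.natDegree - 2) * (x - 2 ^ p.natDegree * AZ p) :=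
    le_mul_of_one_le_left hnn hpow
  have step2 : x ^ (p.natDegree - 2) * (x - 2 ^ p.natDegree * AZ p)
      ≤ (p.natDegree : ℤ) * (x ^ (p.natDegree - 2) * (x - 2 ^ p.natDegree * AZ p)) :=
    le_mul_of_one_le_left (by positivity) hd1
  have step3 : (p.natDegree : ℤ) * (x ^ (p.natDegree - 2) * (x - 2 ^ p.natDegree * AZ p))
      = (p.natDegree : ℤ) * x ^ (p.natDegree - 2) * (x - 2 ^ p.natDegree * AZ p) := by ring
  simp only [gI]
  linarith [step2.trans_eq step3]

lemma gI_mono (j : ℕ) (x y : ℤ) (hx : (tt p j : ℤ) ≤ x) (hxy : x ≤ y) : gI p x ≤ gI p y := by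
  refine Int.le_induction (motive := fun z _ => gI p x ≤ gI p z) ?_ ?_ y hxy
  · exact le_refl _
  · intro y hy ih
    have := F2 p hdeg hlead j y (by linarith)
    have hM : (0:ℤ) ≤ (Mn p (EE p j) : ℤ) := Int.natCast_nonneg _
    linarith

lemma gI_gap (j : ℕ) (x y : ℤ) (hx : (tt p j : ℤ) ≤ x) (hxy : x < y) :
    gI p x + (Mn p (EE p j) : ℤ) < gI p y := by
  have h1 := F2 p hdeg hlead j x hx
  have h2 := gI_mono p hdeg hlead j (x + 1) y (by linarith) (by linarith)
  linarith

lemma F4 (j : ℕ) : 2 * (Mn p (EE p j) : ℤ) < gI p (tt p j) := by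
  obtain ⟨h1, h2, h3, h4, h5⟩ := tt_facts p hdeg hlead j
  have he : (0:ℤ) ≤ (EE p j : ℤ) := Int.natCast_nonneg _
  have ht1 : (1:ℤ) ≤ (tt p j : ℤ) := by linarith
  have hLg0 := Lg0 p hdeg hlead (tt p j) ht1
  have hnn : (0:ℤ) ≤ ((tt p j : ℤ)) ^ (p.natDegree - 1) * ((tt p j : ℤ) - AZ p) := by
    apply mul_nonneg (by positivity) (by linarith)
  simp only [gI]
  linarith

lemma F5 (j : ℕ) : gI p ((tt p j : ℤ) + (EE p j : ℤ)) < 2 * gI p (tt p j) := by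
  obtain ⟨h1, h2, h3, h4, h5⟩ := tt_facts p hdeg hlead j
  set t : ℤ := (tt p j : ℤ) with hto
  set e : ℤ := (EE p j : ℤ) with heo
  have he : (0:ℤ) ≤ e := Int.natCast_nonneg _
  have ht1 : (1:ℤ) ≤ t := by linarith
  have het : e ≤ t := by linarith
  have hA := AZ_nonneg p
  have hc : (1:ℤ) ≤ p.leadingCoeff := hlead
  have hLg3 : p.eval (t + e) - p.eval t
      ≤ (AZ p + p.leadingCoeff) * (p.natDegree : ℤ) * e * 2 ^ p.natDegree * t ^ (p.natDegree - 1) :=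
    (Lg3 p hdeg hlead t e ht1 he het).trans_eq (by ring)
  have hLg0 := Lg0 p hdeg hlead t ht1
  have hpow : (1:ℤ) ≤ t ^ (p.natDegree - 1) := one_le_pow₀ ht1
  have hQ : (0:ℤ) ≤ (AZ p + p.leadingCoeff) * (p.natDegree : ℤ) * e * 2 ^ p.natDegree := by
    have h : (0:ℤ) ≤ AZ p + p.leadingCoeff := by linarith
    positivity
  -- t - A ≥ 1 + e + Q  where Q is the product term
  have k1 : (1:ℤ) + e + (AZ p + p.leadingCoeff) * (p.natDegree : ℤ) * e * 2 ^ p.natDegree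
      ≤ t - AZ p := by
    have : ((AZ p + p.leadingCoeff) * p.natDegree * (EE p j) * 2 ^ p.natDegree : ℤ)
        = (AZ p + p.leadingCoeff) * (p.natDegree : ℤ) * e * 2 ^ p.natDegree := by
      rw [heo]
    linarith [h5, this.ge, this.le]
  have k2 : t ^ (p.natDegree - 1) * ((1:ℤ) + e
        + (AZ p + p.leadingCoeff) * (p.natDegree : ℤ) * e * 2 ^ p.natDegree)
      ≤ t ^ (p.natDegree - 1) * (t - AZ p) :=
    mul_le_mul_of_nonneg_left k1 (by positivity)
  have k3 : (1:ℤ) + e + (AZ p + p.leadingCoeff) * (p.natDegree : ℤ) * e * 2 ^ p.natDegree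
        * t ^ (p.natDegree - 1)
      ≤ t ^ (p.natDegree - 1) * ((1:ℤ) + e
        + (AZ p + p.leadingCoeff) * (p.natDegree : ℤ) * e * 2 ^ p.natDegree) := by
    nlinarith [mul_nonneg (sub_nonneg.mpr hpow) he, mul_nonneg hQ (sub_nonneg.mpr hpow)]
  simp only [gI]
  nlinarith [hLg3, hLg0, k2, k3]
end Facts

/-- Sum over a finite index set of the sequence `tt`. -/
noncomputable def TN (p : Polynomial ℤ) (F : Finset ℕ) : ℕ := ∑ i ∈ F, tt p i

lemma TN_le_EE (p : Polynomial ℤ) {F : Finset ℕ} {j : ℕ} (h : ∀ i ∈ F, i < j) :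
    TN p F ≤ EE p j := by
  rw [EE_eq_sum, TN]
  exact Finset.sum_le_sum_of_subset (fun i hi => Finset.mem_range.mpr (h i hi))

lemma TN_lower (p : Polynomial ℤ) {F : Finset ℕ} (hF : F.Nonempty) :
    tt p (F.max' hF) ≤ TN p F :=
  Finset.single_le_sum (fun _ _ => Nat.zero_le _) (F.max'_mem hF)

lemma TN_upper (p : Polynomial ℤ) {F : Finset ℕ} (hF : F.Nonempty) :
    TN p F ≤ tt p (F.max' hF) + EE p (F.max' hF) := by
  set j := F.max' hF with hj
  have h1 : TN p F = tt p j + TN p (F.erase j) := by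
    rw [TN, TN, ← Finset.add_sum_erase _ _ (F.max'_mem hF)]
  have h2 : TN p (F.erase j) ≤ EE p j :=
    TN_le_EE p fun i hi =>
      lt_of_le_of_ne (F.le_max' i (Finset.mem_of_mem_erase hi)) (Finset.ne_of_mem_erase hi)
  omega

/-- the bad set of values. -/
noncomputable def Sset (p : Polynomial ℤ) : Set ℕ :=
  {a | ∃ F : Finset ℕ, F.Nonempty ∧ (a : ℤ) = gI p (TN p F)}

lemma SF_core (p : Polynomial ℤ) (hdeg : 2 ≤ p.natDegree) (hlead : 0 < p.leadingCoeff)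
    {a b : ℕ} (ha : 1 ≤ a) (hb : 1 ≤ b)
    {F G H : Finset ℕ} (hF : F.Nonempty) (hG : G.Nonempty) (hH : H.Nonempty)
    (hkj : G.max' hG ≤ F.max' hF)
    (hFa : (a : ℤ) = gI p (TN p F)) (hGb : (b : ℤ) = gI p (TN p G))
    (hHab : ((a : ℤ) + b) = gI p (TN p H)) : False := by
  set j := F.max' hF with hjdef
  set k := G.max' hG with hkdef
  set h := H.max' hH with hhdef
  have hFj : ∀ i ∈ F, i ≤ j := fun i hi => F.le_max' i hi
  have hGk : ∀ i ∈ G, i ≤ k := fun i hi => G.le_max' i hi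
  have hHh : ∀ i ∈ H, i ≤ h := fun i hi => H.le_max' i hi
  have haz : (1:ℤ) ≤ (a:ℤ) := by exact_mod_cast ha
  have hbz : (1:ℤ) ≤ (b:ℤ) := by exact_mod_cast hb
  have hFl : (tt p j : ℤ) ≤ (TN p F : ℤ) := by exact_mod_cast TN_lower p hF
  have hGl : (tt p k : ℤ) ≤ (TN p G : ℤ) := by exact_mod_cast TN_lower p hG
  have hHl : (tt p h : ℤ) ≤ (TN p H : ℤ) := by exact_mod_cast TN_lower p hH
  rcases lt_trichotomy j h with hc | hc | hc
  · -- j < h : a,b small compared to block h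
    have hFe : TN p F ≤ EE p h := TN_le_EE p fun i hi => by have := hFj i hi; omega
    have hGe : TN p G ≤ EE p h := TN_le_EE p fun i hi => by have := hGk i hi; omega
    have hma : (a:ℤ) ≤ (Mn p (EE p h) : ℤ) := hFa ▸ Mn_bound p hFe
    have hmb : (b:ℤ) ≤ (Mn p (EE p h) : ℤ) := hGb ▸ Mn_bound p hGe
    have h1 : gI p (tt p h) ≤ gI p (TN p H) := gI_mono p hdeg hlead h _ _ le_rfl hHl
    have h2 := F4 p hdeg hlead h
    rw [← hHab] at h1
    linarith
  · -- j = h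
    rcases eq_or_lt_of_le hkj with hck | hck
    · -- k = j : both big
      have h1 : gI p (tt p j) ≤ gI p (TN p F) := gI_mono p hdeg hlead j _ _ le_rfl hFl
      have h2 : gI p (tt p j) ≤ gI p (TN p G) := by
        refine gI_mono p hdeg hlead j _ _ le_rfl ?_
        rw [hck] at hGl; exact hGl
      have hHu : (TN p H : ℤ) ≤ (tt p j : ℤ) + (EE p j : ℤ) := by
        have := TN_upper p hH
        rw [← hhdef, ← hc] at this
        exact_mod_cast this
      have h3 : gI p (TN p H) ≤ gI p ((tt p j : ℤ) + (EE p j : ℤ)) := by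
        refine gI_mono p hdeg hlead j _ _ ?_ hHu
        rw [hc]; exact hHl
      have h4 := F5 p hdeg hlead j
      rw [← hHab] at h3
      linarith [hFa ▸ h1, hGb ▸ h2]
    · -- k < j : b is small, a and a+b in block j
      have hGe : TN p G ≤ EE p j := TN_le_EE p fun i hi => by have := hGk i hi; omega
      have hmb : (b:ℤ) ≤ (Mn p (EE p j) : ℤ) := hGb ▸ Mn_bound p hGe
      have hHl' : (tt p j : ℤ) ≤ (TN p H : ℤ) := by rw [hc]; exact hHl
      rcases le_or_gt (TN p H) (TN p F) with hle | hlt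
      · have h1 : gI p (TN p H) ≤ gI p (TN p F) :=
          gI_mono p hdeg hlead j _ _ hHl' (by exact_mod_cast hle)
        rw [← hHab, ← hFa] at h1
        linarith
      · have h1 : gI p (TN p F) + (Mn p (EE p j) : ℤ) < gI p (TN p H) :=
          gI_gap p hdeg hlead j _ _ hFl (by exact_mod_cast hlt)
        rw [← hHab, ← hFa] at h1
        linarith
  · -- h < j : a+b small but a big
    have hHe : TN p H ≤ EE p j := TN_le_EE p fun i hi => by have := hHh i hi; omega
    have hmab : (a:ℤ) + b ≤ (Mn p (EE p j) : ℤ) := by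
      have := Mn_bound p hHe
      rw [← hHab] at this; exact this
    have h1 : gI p (tt p j) ≤ gI p (TN p F) := gI_mono p hdeg hlead j _ _ le_rfl hFl
    have h2 := F4 p hdeg hlead j
    rw [← hFa] at h1
    linarith

lemma SF (p : Polynomial ℤ) (hdeg : 2 ≤ p.natDegree) (hlead : 0 < p.leadingCoeff)
    {a b : ℕ} (ha : 1 ≤ a) (hb : 1 ≤ b) (haS : a ∈ Sset p) (hbS : b ∈ Sset p) :
    a + b ∉ Sset p := by
  rintro ⟨H, hH, hHab⟩
  obtain ⟨F, hF, hFa⟩ := haS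
  obtain ⟨G, hG, hGb⟩ := hbS
  have hab : ((a : ℤ) + b) = gI p (TN p H) := by push_cast at hHab; linarith [hHab]
  rcases le_total (G.max' hG) (F.max' hF) with hle | hle
  · exact SF_core p hdeg hlead ha hb hF hG hH hle hFa hGb hab
  · exact SF_core p hdeg hlead hb ha hG hF hH hle hGb hFa (by linarith [hab])

theorem stmt11 (p : Polynomial ℤ) (h0 : p.eval 0 = 0) (hdeg : 2 ≤ p.natDegree)
    (hlead : 0 < p.leadingCoeff) :
    ∃ A : Set ℕ, IPStar A ∧
      ¬ IPStar {q : ℕ × ℕ |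
        ((q.1 : ℤ) + p.eval (q.2 : ℤ)) ∈ (((↑) : ℕ → ℤ) '' A)} := by
  refine ⟨{n | n ∉ Sset p}, ?_, ?_⟩
  · rintro A' ⟨y, hy, hsub⟩
    have h0' : y 0 ∈ FS y := ⟨{0}, Finset.singleton_nonempty 0, (Finset.sum_singleton _ _).symm⟩
    have h1' : y 1 ∈ FS y := ⟨{1}, Finset.singleton_nonempty 1, (Finset.sum_singleton _ _).symm⟩
    have h01 : y 0 + y 1 ∈ FS y :=
      ⟨{0, 1}, ⟨0, by simp⟩, by rw [Finset.sum_pair (by norm_num)]⟩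
    by_cases hc0 : y 0 ∈ Sset p
    · by_cases hc1 : y 1 ∈ Sset p
      · exact ⟨y 0 + y 1,
          SF p hdeg hlead (Nat.one_le_iff_ne_zero.mpr (hy 0))
            (Nat.one_le_iff_ne_zero.mpr (hy 1)) hc0 hc1, hsub h01⟩
      · exact ⟨y 1, hc1, hsub h1'⟩
    · exact ⟨y 0, hc0, hsub h0'⟩
  · intro hIP
    have hxne : ∀ i, (tt p i, tt p i) ≠ (0 : ℕ × ℕ) := by
      intro i hcon
      have h1 := (tt_facts p hdeg hlead i).1
      have he : (0:ℤ) ≤ (EE p i : ℤ) := Int.natCast_nonneg _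
      have : tt p i = 0 := congrArg Prod.fst hcon
      rw [this] at h1
      simp at h1
      omega
    obtain ⟨q, hqB, hqFS⟩ :=
      hIP (FS (fun i => ((tt p i, tt p i) : ℕ × ℕ))) ⟨_, hxne, subset_rfl⟩
    obtain ⟨F, hF, hqsum⟩ := hqFS
    have hq1 : q.1 = TN p F := by rw [hqsum, Prod.fst_sum]; rfl
    have hq2 : q.2 = TN p F := by rw [hqsum, Prod.snd_sum]; rfl
    obtain ⟨n, hn, hneq⟩ := hqB
    apply hn
    refine ⟨F, hF, ?_⟩
    rw [hneq, hq1, hq2]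
    rfl
end

section
/- Let p be an integral polynomial with p(0) = 0 and deg p ≥ 2 with positive leading coefficient. Then there exists β ∈ ℕ such that the set S = {p(n) + n : n = 2^{2^{i_1}} + ... + 2^{2^{i_k}}, β < i_1 < ... < i_k, k ∈ ℕ} has the property that a + b ∉ S for all a, b ∈ S; consequently ℕ \ S is an IP_2*-set. -/
open Polynomial Finset

private lemma sum_two_pow_lt (n : ℕ) : ∑ j ∈ Finset.range n, 2 ^ j < 2 ^ n := by
  induction n with
  | zero => simp
  | succ n ih => rw [Finset.sum_range_succ, pow_succ]; omega

private lemma pow_sub_pow_le {x y : ℤ} (hx : 0 ≤ x) (hxy : x ≤ y) (i : ℕ) :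
    y ^ i - x ^ i ≤ (y - x) * (i * y ^ (i - 1)) := by
  have hy : 0 ≤ y := hx.trans hxy
  induction i with
  | zero => simp
  | succ n ih =>
    have h1 : y ^ (n + 1) - x ^ (n + 1) = y * (y ^ n - x ^ n) + (y - x) * x ^ n := by ring
    have h2 : y * (y ^ n - x ^ n) ≤ y * ((y - x) * (n * y ^ (n - 1))) :=
      mul_le_mul_of_nonneg_left ih hy
    have h3 : (n : ℤ) * (y * y ^ (n - 1)) = n * y ^ n := by
      cases n with
      | zero => simp
      | succ m => rw [Nat.succ_sub_one, ← pow_succ']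
    have h4 : (y - x) * x ^ n ≤ (y - x) * y ^ n :=
      mul_le_mul_of_nonneg_left (pow_le_pow_left₀ hx hxy n) (by linarith)
    calc y ^ (n + 1) - x ^ (n + 1) = y * (y ^ n - x ^ n) + (y - x) * x ^ n := h1
      _ ≤ y * ((y - x) * (n * y ^ (n - 1))) + (y - x) * y ^ n := by linarith
      _ = (y - x) * (n * (y * y ^ (n - 1))) + (y - x) * y ^ n := by ring
      _ = (y - x) * (n * y ^ n) + (y - x) * y ^ n := by rw [h3]
      _ = (y - x) * ((n + 1 : ℕ) * y ^ ((n + 1) - 1)) := by rw [Nat.succ_sub_one]; push_cast; ring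

private lemma pow_sub_pow_ge {x y : ℤ} (hx : 0 ≤ x) (hxy : x ≤ y) (i : ℕ) :
    (y - x) * (i * x ^ (i - 1)) ≤ y ^ i - x ^ i := by
  induction i with
  | zero => simp
  | succ n ih =>
    have hxn : x ^ n ≤ y ^ n := pow_le_pow_left₀ hx hxy n
    have h2 : x * ((y - x) * (n * x ^ (n - 1))) ≤ x * (y ^ n - x ^ n) :=
      mul_le_mul_of_nonneg_left ih hx
    have h2' : x * (y ^ n - x ^ n) ≤ y * (y ^ n - x ^ n) :=
      mul_le_mul_of_nonneg_right hxy (by linarith)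
    have h3 : (n : ℤ) * (x * x ^ (n - 1)) = n * x ^ n := by
      cases n with
      | zero => simp
      | succ m => rw [Nat.succ_sub_one, ← pow_succ']
    have h5 : (y - x) * ((n : ℤ) * x ^ n) ≤ x * (y ^ n - x ^ n) := by
      calc (y - x) * ((n : ℤ) * x ^ n) = x * ((y - x) * (n * x ^ (n - 1))) * 1 := by
            rw [← h3]; ring
        _ = x * ((y - x) * (n * x ^ (n - 1))) := by ring
        _ ≤ x * (y ^ n - x ^ n) := h2
    calc (y - x) * ((n + 1 : ℕ) * x ^ ((n + 1) - 1))
        = (y - x) * ((n : ℤ) * x ^ n) + (y - x) * x ^ n := by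
          rw [Nat.succ_sub_one]; push_cast; ring
      _ ≤ y * (y ^ n - x ^ n) + (y - x) * x ^ n := by linarith
      _ = y ^ (n + 1) - x ^ (n + 1) := by ring

private noncomputable def cB (g : Polynomial ℤ) : ℤ :=
  ∑ i ∈ Finset.range (g.natDegree + 1), |g.coeff i|

private lemma cB_nonneg (g : Polynomial ℤ) : 0 ≤ cB g :=
  Finset.sum_nonneg fun i _ => abs_nonneg _

private lemma leadingCoeff_le_cB (g : Polynomial ℤ) : |g.leadingCoeff| ≤ cB g := by
  have := Finset.single_le_sum (f := fun i => |g.coeff i|)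
    (fun i _ => abs_nonneg _) (Finset.self_mem_range_succ g.natDegree)
  rw [Polynomial.leadingCoeff]
  exact this

private lemma abs_eval_le (g : Polynomial ℤ) {x : ℤ} (hx : 1 ≤ x) :
    |g.eval x| ≤ cB g * x ^ g.natDegree := by
  have hx0 : (0:ℤ) ≤ x := by linarith
  rw [Polynomial.eval_eq_sum_range]
  calc |∑ i ∈ Finset.range (g.natDegree + 1), g.coeff i * x ^ i|
      ≤ ∑ i ∈ Finset.range (g.natDegree + 1), |g.coeff i * x ^ i| :=
        Finset.abs_sum_le_sum_abs _ _
    _ ≤ ∑ i ∈ Finset.range (g.natDegree + 1), |g.coeff i| * x ^ g.natDegree := by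
        refine Finset.sum_le_sum fun i hi => ?_
        rw [abs_mul, abs_pow, abs_of_nonneg hx0]
        exact mul_le_mul_of_nonneg_left
          (pow_le_pow_right₀ hx (Nat.lt_succ_iff.mp (Finset.mem_range.mp hi))) (abs_nonneg _)
    _ = cB g * x ^ g.natDegree := by rw [← Finset.sum_mul]; rfl

private lemma abs_eval_sub_eval_le (g : Polynomial ℤ) {x y : ℤ} (hx : 1 ≤ x) (hxy : x ≤ y) :
    |g.eval y - g.eval x| ≤
      (y - x) * (cB g * (g.natDegree * y ^ (g.natDegree - 1))) := by
  have hx0 : (0:ℤ) ≤ x := by linarith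
  have hy : 1 ≤ y := hx.trans hxy
  have hdiff : g.eval y - g.eval x =
      ∑ i ∈ Finset.range (g.natDegree + 1), g.coeff i * (y ^ i - x ^ i) := by
    rw [Polynomial.eval_eq_sum_range, Polynomial.eval_eq_sum_range, ← Finset.sum_sub_distrib]
    exact Finset.sum_congr rfl fun i _ => by ring
  rw [hdiff]
  calc |∑ i ∈ Finset.range (g.natDegree + 1), g.coeff i * (y ^ i - x ^ i)|
      ≤ ∑ i ∈ Finset.range (g.natDegree + 1), |g.coeff i| * (y ^ i - x ^ i) := by
        refine (Finset.abs_sum_le_sum_abs _ _).trans (le_of_eq ?_)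
        refine Finset.sum_congr rfl fun i _ => ?_
        rw [abs_mul, abs_of_nonneg (by nlinarith [pow_le_pow_left₀ hx0 hxy i] : (0:ℤ) ≤ y ^ i - x ^ i)]
    _ ≤ ∑ i ∈ Finset.range (g.natDegree + 1),
          |g.coeff i| * ((y - x) * (g.natDegree * y ^ (g.natDegree - 1))) := by
        refine Finset.sum_le_sum fun i hi => ?_
        refine mul_le_mul_of_nonneg_left ?_ (abs_nonneg _)
        refine (pow_sub_pow_le hx0 hxy i).trans ?_
        refine mul_le_mul_of_nonneg_left ?_ (by linarith)
        have h1 : (i : ℤ) ≤ g.natDegree := by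
          exact_mod_cast Nat.lt_succ_iff.mp (Finset.mem_range.mp hi)
        have h2 : y ^ (i - 1) ≤ y ^ (g.natDegree - 1) :=
          pow_le_pow_right₀ hy (Nat.sub_le_sub_right (Nat.lt_succ_iff.mp (Finset.mem_range.mp hi)) 1)
        have := mul_le_mul h1 h2 (pow_nonneg (by linarith) _) (by positivity)
        exact this
    _ = cB g * ((y - x) * (g.natDegree * y ^ (g.natDegree - 1))) := by rw [← Finset.sum_mul]; rfl
    _ = (y - x) * (cB g * (g.natDegree * y ^ (g.natDegree - 1))) := by ring

private lemma one_le_cB {p : Polynomial ℤ} (hlead : 0 < p.leadingCoeff) : 1 ≤ cB p := by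
  have h1 : (1:ℤ) ≤ |p.leadingCoeff| := by
    rw [abs_of_pos hlead]; omega
  exact h1.trans (leadingCoeff_le_cB p)

private lemma cB_eraseLead_le {p : Polynomial ℤ} (hd : 1 ≤ p.natDegree) :
    cB p.eraseLead ≤ cB p := by
  have hdl := Polynomial.eraseLead_natDegree_le p
  have hdE : p.eraseLead.natDegree + 1 ≤ p.natDegree + 1 := by omega
  unfold cB
  calc ∑ i ∈ Finset.range (p.eraseLead.natDegree + 1), |p.eraseLead.coeff i|
      = ∑ i ∈ Finset.range (p.eraseLead.natDegree + 1), |p.coeff i| := by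
        refine Finset.sum_congr rfl fun i hi => ?_
        have hi' := Finset.mem_range.mp hi
        rw [Polynomial.eraseLead_coeff_of_ne i (by omega)]
    _ ≤ ∑ i ∈ Finset.range (p.natDegree + 1), |p.coeff i| :=
        Finset.sum_le_sum_of_subset_of_nonneg (Finset.range_subset_range.mpr hdE)
          (fun i _ _ => abs_nonneg _)

private lemma eval_decomp (p : Polynomial ℤ) (z : ℤ) :
    p.eval z = p.eraseLead.eval z + p.leadingCoeff * z ^ p.natDegree := by
  conv_lhs => rw [← Polynomial.eraseLead_add_C_mul_X_pow p]
  simp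

private lemma eval_lower {p : Polynomial ℤ} (hd : 1 ≤ p.natDegree)
    (hlead : 0 < p.leadingCoeff) {x : ℤ} (hx : 1 ≤ x) :
    x ^ p.natDegree - cB p * x ^ (p.natDegree - 1) ≤ p.eval x := by
  have hx0 : (0:ℤ) ≤ x := by linarith
  have hE := abs_eval_le p.eraseLead hx
  have h1 : cB p.eraseLead * x ^ p.eraseLead.natDegree ≤ cB p * x ^ (p.natDegree - 1) :=
    mul_le_mul (cB_eraseLead_le hd)
      (pow_le_pow_right₀ hx (Polynomial.eraseLead_natDegree_le p))
      (by positivity) (cB_nonneg p)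
  have h2 : 1 * x ^ p.natDegree ≤ p.leadingCoeff * x ^ p.natDegree :=
    mul_le_mul_of_nonneg_right (by omega) (by positivity)
  rw [eval_decomp]
  have h3 := (abs_le.mp (hE.trans h1)).1
  linarith

private lemma eval_upper {p : Polynomial ℤ} {x : ℤ} (hx : 1 ≤ x) :
    p.eval x ≤ cB p * x ^ p.natDegree :=
  (le_abs_self _).trans (abs_eval_le p hx)

private lemma eval_lower2 {p : Polynomial ℤ} (hd : 1 ≤ p.natDegree)
    (hlead : 0 < p.leadingCoeff) {x : ℤ} (hx : 2 * cB p ≤ x) :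
    x ^ p.natDegree ≤ 2 * p.eval x := by
  have hA := one_le_cB hlead
  have hx1 : (1:ℤ) ≤ x := by linarith
  have h1 := eval_lower hd hlead hx1
  have hpow : x ^ p.natDegree = x * x ^ (p.natDegree - 1) := by
    conv_lhs => rw [← Nat.succ_pred_eq_of_pos (by omega : 0 < p.natDegree)]
    rw [pow_succ']
    rfl
  have h2 : 2 * cB p * x ^ (p.natDegree - 1) ≤ x * x ^ (p.natDegree - 1) :=
    mul_le_mul_of_nonneg_right hx (by positivity)
  rw [hpow] at h1 ⊢
  linarith

private lemma diff_lower {p : Polynomial ℤ} (hdeg : 2 ≤ p.natDegree)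
    (hlead : 0 < p.leadingCoeff) {x y : ℤ}
    (hx : 2 ^ (p.natDegree + 1) * cB p ≤ x) (hxy : x ≤ y) (h2x : y ≤ 2 * x) :
    (y - x) * x ^ (p.natDegree - 1) ≤ p.eval y - p.eval x := by
  set d := p.natDegree with hd
  set A := cB p with hAdef
  have hA : 1 ≤ A := one_le_cB hlead
  have hp8 : (8:ℤ) ≤ 2 ^ (d + 1) := by
    calc (8:ℤ) = 2 ^ 3 := by norm_num
    _ ≤ 2 ^ (d + 1) := pow_le_pow_right₀ one_le_two (by omega)
  have hx1 : (1:ℤ) ≤ x := by nlinarith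
  have hx0 : (0:ℤ) ≤ x := by linarith
  have hy1 : (1:ℤ) ≤ y := hx1.trans hxy
  have hD : (0:ℤ) ≤ y - x := by linarith
  -- decompose
  have hdec : p.eval y - p.eval x =
      p.leadingCoeff * (y ^ d - x ^ d) + (p.eraseLead.eval y - p.eraseLead.eval x) := by
    rw [eval_decomp p x, eval_decomp p y]; ring
  -- leading part lower bound
  have k1 : (y - x) * (d * x ^ (d - 1)) ≤ y ^ d - x ^ d := pow_sub_pow_ge hx0 hxy d
  have k4 : (0:ℤ) ≤ y ^ d - x ^ d := by
    have := pow_le_pow_left₀ hx0 hxy d; linarith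
  have k5 : 1 * (y ^ d - x ^ d) ≤ p.leadingCoeff * (y ^ d - x ^ d) :=
    mul_le_mul_of_nonneg_right (by omega) k4
  -- eraseLead part bound
  have k2 := abs_eval_sub_eval_le p.eraseLead hx1 hxy
  have hdE := Polynomial.eraseLead_natDegree_le p
  have k2' : cB p.eraseLead * (p.eraseLead.natDegree * y ^ (p.eraseLead.natDegree - 1))
      ≤ A * (d * y ^ (d - 2)) := by
    refine mul_le_mul (cB_eraseLead_le (by omega)) ?_ ?_ (by linarith)
    · refine mul_le_mul ?_ ?_ (by positivity) (by positivity)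
      · exact_mod_cast Nat.le_of_lt_succ (by omega)
      · exact pow_le_pow_right₀ hy1 (by omega)
    · positivity
  have k2'' : |p.eraseLead.eval y - p.eraseLead.eval x| ≤ (y - x) * (A * (d * y ^ (d - 2))) :=
    k2.trans (mul_le_mul_of_nonneg_left k2' hD)
  have k2l := (abs_le.mp k2'').1
  -- bound y^(d-2) by x^(d-2)
  have hyd2 : y ^ (d - 2) ≤ 2 ^ (d - 2) * x ^ (d - 2) := by
    calc y ^ (d - 2) ≤ (2 * x) ^ (d - 2) := pow_le_pow_left₀ (by linarith) h2x _
      _ = 2 ^ (d - 2) * x ^ (d - 2) := mul_pow 2 x (d - 2)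
  have hpowx : x ^ (d - 1) = x * x ^ (d - 2) := by
    have : d - 1 = (d - 2) + 1 := by omega
    rw [this, pow_succ']
  -- key scalar inequality
  have hbr : (d:ℤ) * (2 ^ (d - 2) * A) ≤ ((d:ℤ) - 1) * x := by
    have h8 : (2:ℤ) ^ (d + 1) = 8 * 2 ^ (d - 2) := by
      have : d + 1 = (d - 2) + 3 := by omega
      rw [this, pow_add]; ring
    have hd2 : (2:ℤ) ≤ (d:ℤ) := by exact_mod_cast hdeg
    have hu : (0:ℤ) ≤ 2 ^ (d - 2) * A := by positivity
    have hx8 : 8 * (2 ^ (d - 2) * A) ≤ x := by rw [h8] at hx; linarith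
    nlinarith [mul_nonneg hu (by linarith : (0:ℤ) ≤ 7 * (d:ℤ) - 8),
      mul_le_mul_of_nonneg_left hx8 (by linarith : (0:ℤ) ≤ (d:ℤ) - 1)]
  -- assemble
  have main : (y - x) * ((d:ℤ) * x ^ (d - 1)) - (y - x) * (A * ((d:ℤ) * (2 ^ (d - 2) * x ^ (d - 2))))
      ≤ p.eval y - p.eval x := by
    have k2m : -((y - x) * (A * ((d:ℤ) * (2 ^ (d - 2) * x ^ (d - 2))))) ≤
        p.eraseLead.eval y - p.eraseLead.eval x := by
      have h6 : (y - x) * (A * ((d:ℤ) * y ^ (d - 2))) ≤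
          (y - x) * (A * ((d:ℤ) * (2 ^ (d - 2) * x ^ (d - 2)))) := by
        refine mul_le_mul_of_nonneg_left ?_ hD
        refine mul_le_mul_of_nonneg_left ?_ (by linarith)
        exact mul_le_mul_of_nonneg_left hyd2 (by positivity)
      linarith
    rw [hdec]
    linarith
  have hfin : (y - x) * x ^ (d - 1) + (y - x) * (A * ((d:ℤ) * (2 ^ (d - 2) * x ^ (d - 2))))
      ≤ (y - x) * ((d:ℤ) * x ^ (d - 1)) := by
    rw [hpowx]
    have hstep : x + A * ((d:ℤ) * 2 ^ (d - 2)) ≤ (d:ℤ) * x := by nlinarith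
    calc (y - x) * (x * x ^ (d - 2)) + (y - x) * (A * ((d:ℤ) * (2 ^ (d - 2) * x ^ (d - 2))))
        = ((y - x) * x ^ (d - 2)) * (x + A * ((d:ℤ) * 2 ^ (d - 2))) := by ring
      _ ≤ ((y - x) * x ^ (d - 2)) * ((d:ℤ) * x) := by
          refine mul_le_mul_of_nonneg_left hstep ?_
          positivity
      _ = (y - x) * ((d:ℤ) * (x * x ^ (d - 2))) := by ring
  linarith

private lemma fmono {p : Polynomial ℤ} (hdeg : 2 ≤ p.natDegree) (hlead : 0 < p.leadingCoeff)
    {x y : ℤ} (hx : 2 ^ (p.natDegree + 1) * cB p ≤ x) (hxy : x < y) :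
    p.eval x + x < p.eval y + y := by
  have hA : 1 ≤ cB p := one_le_cB hlead
  have hp8 : (8:ℤ) ≤ 2 ^ (p.natDegree + 1) := by
    calc (8:ℤ) = 2 ^ 3 := by norm_num
    _ ≤ 2 ^ (p.natDegree + 1) := pow_le_pow_right₀ one_le_two (by omega)
  have step : ∀ z : ℤ, 2 ^ (p.natDegree + 1) * cB p ≤ z →
      p.eval z + z < p.eval (z + 1) + (z + 1) := by
    intro z hz
    have hz1 : (1:ℤ) ≤ z := by nlinarith
    have hd := diff_lower hdeg hlead hz (by linarith : z ≤ z + 1) (by linarith : z + 1 ≤ 2 * z)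
    have hp : (0:ℤ) ≤ z ^ (p.natDegree - 1) := by positivity
    have : (z + 1 - z) * z ^ (p.natDegree - 1) = z ^ (p.natDegree - 1) := by ring
    rw [this] at hd
    linarith
  have key : ∀ n : ℤ, x + 1 ≤ n → p.eval x + x < p.eval n + n := by
    intro n hn
    refine Int.le_induction (motive := fun n _ => p.eval x + x < p.eval n + n) ?_ ?_ n hn
    · exact step x hx
    · intro m hm ih
      exact ih.trans (step m (by linarith))
  exact key y (by omega)

private lemma nS_lower {I : Finset ℕ} (hI : I.Nonempty) :
    2 ^ 2 ^ (I.max' hI) ≤ ∑ i ∈ I, 2 ^ 2 ^ i :=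
  Finset.single_le_sum (f := fun i => 2 ^ 2 ^ i) (fun i _ => Nat.zero_le _) (I.max'_mem hI)

private lemma nS_upper {I : Finset ℕ} (hI : I.Nonempty) (hm : 1 ≤ I.max' hI) :
    ∑ i ∈ I, 2 ^ 2 ^ i < 2 ^ 2 ^ (I.max' hI) + 2 ^ (2 ^ (I.max' hI - 1) + 1) := by
  set m := I.max' hI with hmdef
  have hmem : m ∈ I := I.max'_mem hI
  have hsplit : 2 ^ 2 ^ m + ∑ i ∈ I.erase m, 2 ^ 2 ^ i = ∑ i ∈ I, 2 ^ 2 ^ i :=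
    Finset.add_sum_erase I (fun i => 2 ^ 2 ^ i) hmem
  have hrest : ∑ i ∈ I.erase m, 2 ^ 2 ^ i < 2 ^ (2 ^ (m - 1) + 1) := by
    have himg : ∑ i ∈ I.erase m, 2 ^ 2 ^ i = ∑ j ∈ (I.erase m).image (fun i => 2 ^ i), 2 ^ j := by
      rw [Finset.sum_image]
      intro x _ y _ h
      exact Nat.pow_right_injective le_rfl h
    have hsub : (I.erase m).image (fun i => 2 ^ i) ⊆ Finset.range (2 ^ (m - 1) + 1) := by
      intro j hj
      obtain ⟨i, hi, rfl⟩ := Finset.mem_image.mp hj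
      have hiI := Finset.mem_of_mem_erase hi
      have hne := Finset.ne_of_mem_erase hi
      have hile : i ≤ m := Finset.le_max' I i hiI
      have : i ≤ m - 1 := by omega
      exact Finset.mem_range.mpr (Nat.lt_succ_of_le (Nat.pow_le_pow_right (by norm_num) this))
    calc ∑ i ∈ I.erase m, 2 ^ 2 ^ i
        = ∑ j ∈ (I.erase m).image (fun i => 2 ^ i), 2 ^ j := himg
      _ ≤ ∑ j ∈ Finset.range (2 ^ (m - 1) + 1), 2 ^ j :=
          Finset.sum_le_sum_of_subset hsub
      _ < 2 ^ (2 ^ (m - 1) + 1) := sum_two_pow_lt _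
  omega

private lemma two_pow_pred {m : ℕ} (hm : 1 ≤ m) : 2 ^ (m - 1) + 2 ^ (m - 1) = 2 ^ m := by
  have h : m - 1 + 1 = m := by omega
  calc 2 ^ (m - 1) + 2 ^ (m - 1) = 2 ^ (m - 1) * 2 := by ring
    _ = 2 ^ m := by rw [← pow_succ, h]

private lemma big_pow {C : ℤ} {e : ℕ} (he : C.toNat + 2 ≤ e) : C < (2:ℤ) ^ 2 ^ e := by
  have h1 : C.toNat < 2 ^ 2 ^ e := by
    calc C.toNat < 2 ^ C.toNat := Nat.lt_two_pow_self (n := C.toNat)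
      _ ≤ 2 ^ 2 ^ e := Nat.pow_le_pow_right (by norm_num)
          (le_trans (by omega) (Nat.le_of_lt (Nat.lt_two_pow_self (n := e))))
  calc C ≤ (C.toNat : ℤ) := Int.self_le_toNat C
    _ < ((2 ^ 2 ^ e : ℕ) : ℤ) := by exact_mod_cast h1
    _ = (2:ℤ) ^ 2 ^ e := by push_cast; ring

private lemma fbound {p : Polynomial ℤ} (hdeg : 2 ≤ p.natDegree) (hlead : 0 < p.leadingCoeff)
    {x X : ℤ} (hX2 : 2 ≤ X) (hx1 : X ≤ x) (hx2 : x ≤ 2 * X) (h2A : 2 * cB p ≤ x) :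
    p.eval x + x ≤ (cB p * 2 ^ p.natDegree + 1) * X ^ p.natDegree ∧
    X ^ p.natDegree ≤ 2 * (p.eval x + x) ∧ 0 < p.eval x + x := by
  set d := p.natDegree
  set A := cB p with hAdef
  have hA : 1 ≤ A := one_le_cB hlead
  have hx0 : (1:ℤ) ≤ x := by linarith
  have hXd : (0:ℤ) ≤ X := by linarith
  have h1 : p.eval x ≤ A * x ^ d := eval_upper hx0
  have h2 : x ^ d ≤ (2 * X) ^ d := pow_le_pow_left₀ (by linarith) hx2 d
  have h3 : (2 * X) ^ d = 2 ^ d * X ^ d := mul_pow 2 X d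
  have h4 : 2 * X ≤ X ^ d := by
    calc 2 * X ≤ X * X := mul_le_mul_of_nonneg_right hX2 hXd
      _ = X ^ 2 := (sq X).symm
      _ ≤ X ^ d := pow_le_pow_right₀ (by linarith) hdeg
  have hup : p.eval x + x ≤ (A * 2 ^ d + 1) * X ^ d := by
    have h5 : p.eval x ≤ A * (2 ^ d * X ^ d) := by
      calc p.eval x ≤ A * x ^ d := h1
        _ ≤ A * (2 ^ d * X ^ d) := by
            rw [← h3]; exact mul_le_mul_of_nonneg_left h2 (by linarith)
    nlinarith [h5, h4, hx2]
  have hlow : X ^ d ≤ 2 * (p.eval x + x) := by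
    have h5 : x ^ d ≤ 2 * p.eval x := eval_lower2 (by omega) hlead h2A
    have h6 : X ^ d ≤ x ^ d := pow_le_pow_left₀ hXd hx1 d
    linarith
  have hpos : 0 < p.eval x + x := by
    have h7 : (0:ℤ) < X ^ d := by positivity
    linarith
  exact ⟨hup, hlow, hpos⟩

private noncomputable def cmax (p : Polynomial ℤ) : ℤ :=
  2 ^ (p.natDegree + 1) * cB p + 2 * (cB p * (p.natDegree : ℤ) * 2 ^ p.natDegree + 2)
    + 4 * (cB p * 2 ^ p.natDegree + 1) + |p.coeff 1 + 1| + 13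

private lemma cmax_parts {p : Polynomial ℤ} (hlead : 0 < p.leadingCoeff) :
    2 ^ (p.natDegree + 1) * cB p ≤ cmax p ∧
    2 * (cB p * (p.natDegree : ℤ) * 2 ^ p.natDegree + 2) ≤ cmax p ∧
    4 * (cB p * 2 ^ p.natDegree + 1) ≤ cmax p ∧
    |p.coeff 1 + 1| ≤ cmax p ∧ (13:ℤ) ≤ cmax p := by
  have hA : 1 ≤ cB p := one_le_cB hlead
  have h1 : (0:ℤ) ≤ 2 ^ (p.natDegree + 1) * cB p := by positivity
  have h2 : (0:ℤ) ≤ 2 * (cB p * (p.natDegree : ℤ) * 2 ^ p.natDegree + 2) := by positivity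
  have h3 : (0:ℤ) ≤ 4 * (cB p * 2 ^ p.natDegree + 1) := by positivity
  have h4 : (0:ℤ) ≤ |p.coeff 1 + 1| := abs_nonneg _
  unfold cmax
  refine ⟨by linarith, by linarith, by linarith, by linarith, by linarith⟩

private lemma sq_ge' {z : ℤ} (hz : 2 ≤ z) : z ≤ z ^ 2 := by nlinarith [sq_nonneg (z - 1)]

private lemma two_mul_le_sq {z : ℤ} (hz : 2 ≤ z) : 2 * z ≤ z ^ 2 := by nlinarith [sq_nonneg (z - 1)]

private lemma two_mul_lt_sq {z : ℤ} (hz : 3 ≤ z) : 2 * z < z ^ 2 := by nlinarith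

private lemma quad_final {L P : ℤ} (hL : 1 ≤ L) (hP : 14 ≤ P) :
    L * (P ^ 2 + 2 * P) ^ 2 + P * (P ^ 2 + 2 * P) < 2 * L * P ^ 4 - P := by
  have hP0 : (0:ℤ) ≤ P := by linarith
  have hP2 : (0:ℤ) ≤ P ^ 2 := sq_nonneg P
  have hP3 : (0:ℤ) ≤ P ^ 3 := pow_nonneg hP0 3
  have hL0 : (0:ℤ) ≤ L := by linarith
  have hL1 : (0:ℤ) ≤ L - 1 := by linarith
  have h1 : (0:ℤ) ≤ L * P ^ 3 * (P - 14) := mul_nonneg (mul_nonneg hL0 hP3) (by linarith)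
  have h4 : (0:ℤ) ≤ P ^ 2 * (P - 14) := mul_nonneg hP2 (by linarith)
  have h5 : (0:ℤ) ≤ P * (P - 14) := mul_nonneg hP0 (by linarith)
  have h2 : (0:ℤ) ≤ (L - 1) * P ^ 3 := mul_nonneg hL1 hP3
  have h6 : (0:ℤ) ≤ (L - 1) * (P ^ 3 - P ^ 2) := mul_nonneg hL1 (by nlinarith [h4])
  nlinarith [h1, h2, h4, h5, h6, hP]
set_option maxHeartbeats 1000000 in
private lemma sumfree_main {p : Polynomial ℤ} (h0 : p.eval 0 = 0) (hdeg : 2 ≤ p.natDegree)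
    (hlead : 0 < p.leadingCoeff) {I J K : Finset ℕ}
    (hI : I.Nonempty) (hJ : J.Nonempty) (hK : K.Nonempty)
    (hβI : ∀ i ∈ I, (cmax p).toNat + 3 < i)
    (hβJ : ∀ i ∈ J, (cmax p).toNat + 3 < i)
    (hβK : ∀ i ∈ K, (cmax p).toNat + 3 < i)
    (hrs : I.max' hI ≤ J.max' hJ) :
    (p.eval ((∑ i ∈ I, 2 ^ 2 ^ i : ℕ) : ℤ) + ((∑ i ∈ I, 2 ^ 2 ^ i : ℕ) : ℤ)) +
      (p.eval ((∑ i ∈ J, 2 ^ 2 ^ i : ℕ) : ℤ) + ((∑ i ∈ J, 2 ^ 2 ^ i : ℕ) : ℤ)) ≠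
      p.eval ((∑ i ∈ K, 2 ^ 2 ^ i : ℕ) : ℤ) + ((∑ i ∈ K, 2 ^ 2 ^ i : ℕ) : ℤ) := by
  intro heq
  have hA : 1 ≤ cB p := one_le_cB hlead
  obtain ⟨hc1, hc2, hc3, hc4, hc13⟩ := cmax_parts hlead
  have hp8 : (8:ℤ) ≤ 2 ^ (p.natDegree + 1) := by
    calc (8:ℤ) = 2 ^ 3 := by norm_num
    _ ≤ 2 ^ (p.natDegree + 1) := pow_le_pow_right₀ one_le_two (by omega)
  set mi := I.max' hI with hmidef
  set mj := J.max' hJ with hmjdef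
  set mk := K.max' hK with hmkdef
  have hmi : (cmax p).toNat + 3 < mi := hβI _ (I.max'_mem hI)
  have hmj : (cmax p).toNat + 3 < mj := hβJ _ (J.max'_mem hJ)
  have hmk : (cmax p).toNat + 3 < mk := hβK _ (K.max'_mem hK)
  set a : ℤ := ((∑ i ∈ I, 2 ^ 2 ^ i : ℕ) : ℤ) with hadef
  set b : ℤ := ((∑ i ∈ J, 2 ^ 2 ^ i : ℕ) : ℤ) with hbdef
  set c : ℤ := ((∑ i ∈ K, 2 ^ 2 ^ i : ℕ) : ℤ) with hcdef
  set P : ℤ := 2 ^ 2 ^ (mi - 1) with hPdef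
  set Q : ℤ := 2 ^ 2 ^ (mj - 1) with hQdef
  set T : ℤ := 2 ^ 2 ^ (mk - 1) with hTdef
  clear_value mi mj mk a b c P Q T
  have hPsq : P ^ 2 = (2:ℤ) ^ 2 ^ mi := by
    rw [hPdef, ← pow_mul]; congr 1
    have := two_pow_pred (show 1 ≤ mi by omega); omega
  have hQsq : Q ^ 2 = (2:ℤ) ^ 2 ^ mj := by
    rw [hQdef, ← pow_mul]; congr 1
    have := two_pow_pred (show 1 ≤ mj by omega); omega
  have hTsq : T ^ 2 = (2:ℤ) ^ 2 ^ mk := by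
    rw [hTdef, ← pow_mul]; congr 1
    have := two_pow_pred (show 1 ≤ mk by omega); omega
  have hP2 : (2:ℤ) ≤ P := by
    rw [hPdef]
    calc (2:ℤ) = 2 ^ 1 := (pow_one 2).symm
    _ ≤ 2 ^ 2 ^ (mi - 1) := pow_le_pow_right₀ one_le_two (Nat.one_le_two_pow)
  have hQ2 : (2:ℤ) ≤ Q := by
    rw [hQdef]
    calc (2:ℤ) = 2 ^ 1 := (pow_one 2).symm
    _ ≤ 2 ^ 2 ^ (mj - 1) := pow_le_pow_right₀ one_le_two (Nat.one_le_two_pow)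
  have hT2 : (2:ℤ) ≤ T := by
    rw [hTdef]
    calc (2:ℤ) = 2 ^ 1 := (pow_one 2).symm
    _ ≤ 2 ^ 2 ^ (mk - 1) := pow_le_pow_right₀ one_le_two (Nat.one_le_two_pow)
  have hPbig : cmax p < P := by rw [hPdef]; exact big_pow (by omega)
  have hQbig : cmax p < Q := by rw [hQdef]; exact big_pow (by omega)
  have hTbig : cmax p < T := by rw [hTdef]; exact big_pow (by omega)
  -- size bounds
  have haL : P ^ 2 ≤ a := by
    have h := nS_lower hI; rw [← hmidef] at h; rw [hPsq, hadef]; exact_mod_cast h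
  have hbL : Q ^ 2 ≤ b := by
    have h := nS_lower hJ; rw [← hmjdef] at h; rw [hQsq, hbdef]; exact_mod_cast h
  have hcL : T ^ 2 ≤ c := by
    have h := nS_lower hK; rw [← hmkdef] at h; rw [hTsq, hcdef]; exact_mod_cast h
  have haU : a < P ^ 2 + 2 * P := by
    have h := nS_upper hI (by rw [← hmidef]; omega)
    rw [← hmidef] at h
    have h' : a < (2:ℤ) ^ 2 ^ mi + 2 ^ (2 ^ (mi - 1) + 1) := by rw [hadef]; exact_mod_cast h
    have hconv : (2:ℤ) ^ (2 ^ (mi - 1) + 1) = 2 * P := by rw [hPdef, pow_succ]; ring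
    rw [hPsq]; linarith [h', hconv.le, hconv.ge]
  have hbU : b < Q ^ 2 + 2 * Q := by
    have h := nS_upper hJ (by rw [← hmjdef]; omega)
    rw [← hmjdef] at h
    have h' : b < (2:ℤ) ^ 2 ^ mj + 2 ^ (2 ^ (mj - 1) + 1) := by rw [hbdef]; exact_mod_cast h
    have hconv : (2:ℤ) ^ (2 ^ (mj - 1) + 1) = 2 * Q := by rw [hQdef, pow_succ]; ring
    rw [hQsq]; linarith [h', hconv.le, hconv.ge]
  have hcU : c < T ^ 2 + 2 * T := by
    have h := nS_upper hK (by rw [← hmkdef]; omega)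
    rw [← hmkdef] at h
    have h' : c < (2:ℤ) ^ 2 ^ mk + 2 ^ (2 ^ (mk - 1) + 1) := by rw [hcdef]; exact_mod_cast h
    have hconv : (2:ℤ) ^ (2 ^ (mk - 1) + 1) = 2 * T := by rw [hTdef, pow_succ]; ring
    rw [hTsq]; linarith [h', hconv.le, hconv.ge]
  -- f bounds
  have hcA : 2 * cB p ≤ cmax p := by
    have h8A : 8 * cB p ≤ 2 ^ (p.natDegree + 1) * cB p :=
      mul_le_mul_of_nonneg_right hp8 (by linarith)
    linarith
  have hPP : P ≤ P ^ 2 := sq_ge' hP2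
  have hQQ : Q ≤ Q ^ 2 := sq_ge' hQ2
  have hTT : T ≤ T ^ 2 := sq_ge' hT2
  have hPP2 : 2 * P ≤ P ^ 2 := two_mul_le_sq hP2
  have hQQ2 : 2 * Q ≤ Q ^ 2 := two_mul_le_sq hQ2
  have hTT2 : 2 * T ≤ T ^ 2 := two_mul_le_sq hT2
  have h2Aa : 2 * cB p ≤ a := by linarith only [hcA, hPbig, hPP, haL]
  have h2Ab : 2 * cB p ≤ b := by linarith only [hcA, hQbig, hQQ, hbL]
  have h2Ac : 2 * cB p ≤ c := by linarith only [hcA, hTbig, hTT, hcL]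
  have hfa := fbound (x := a) (X := P ^ 2) hdeg hlead (by linarith only [hPP, hP2])
    haL (by linarith only [haU, hPP2]) h2Aa
  have hfb := fbound (x := b) (X := Q ^ 2) hdeg hlead (by linarith only [hQQ, hQ2])
    hbL (by linarith only [hbU, hQQ2]) h2Ab
  have hfc := fbound (x := c) (X := T ^ 2) hdeg hlead (by linarith only [hTT, hT2])
    hcL (by linarith only [hcU, hTT2]) h2Ac
  have hPQ : P ≤ Q := by
    rw [hPdef, hQdef]
    exact pow_le_pow_right₀ one_le_two (Nat.pow_le_pow_right (by norm_num) (by omega))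
  have hcBd : (0:ℤ) ≤ cB p * 2 ^ p.natDegree := by
    have h1 := cB_nonneg p
    have h2 : (0:ℤ) ≤ 2 ^ p.natDegree := by positivity
    exact mul_nonneg h1 h2
  have hC2nn : (0:ℤ) ≤ cB p * 2 ^ p.natDegree + 1 := by linarith only [hcBd]
  rcases lt_trichotomy mk mj with hcase | hcase | hcase
  · -- mk < mj : c is too small, contradicts monotonicity
    have hT2Q : T ^ 2 ≤ Q := by
      rw [hTsq, hQdef]
      exact pow_le_pow_right₀ one_le_two (Nat.pow_le_pow_right (by norm_num) (by omega))
    have hQ3 : (3:ℤ) ≤ Q := by linarith only [hQbig, hc13]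
    have h2Q : 2 * Q < Q ^ 2 := two_mul_lt_sq hQ3
    have hcb : c < b := by linarith only [hcU, hTT2, hT2Q, h2Q, hbL]
    have hthr : 2 ^ (p.natDegree + 1) * cB p ≤ c := by
      linarith only [hc1, hTbig, hTT, hcL]
    have hmono := fmono hdeg hlead hthr hcb
    linarith only [hmono, heq, hfa.2.2]
  · -- mk = mj : the main case
    have hTQ : T = Q := by rw [hTdef, hQdef, hcase]
    rw [hTQ] at hcL hcU hTbig hTT hTT2 hT2 hfc
    have hbc : b < c := by
      rcases lt_trichotomy c b with h | h | h
      · exfalso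
        have hthr : 2 ^ (p.natDegree + 1) * cB p ≤ c := by
          linarith only [hc1, hTbig, hQQ, hcL]
        have hmono := fmono hdeg hlead hthr h
        linarith only [hmono, heq, hfa.2.2]
      · exfalso
        rw [h] at heq
        linarith only [heq, hfa.2.2]
      · exact h
    have hD1 : 1 ≤ c - b := by omega
    have hDQ : c - b ≤ 2 * Q := by linarith only [hcU, hbL]
    have hc2b : c ≤ 2 * b := by linarith only [hcU, hQQ2, hbL]
    have hb1 : (1:ℤ) ≤ b := by linarith only [hbL, two_mul_le_sq hQ2, hQ2]
    have hb0 : (0:ℤ) ≤ b := by linarith only [hb1]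
    have hc0 : (0:ℤ) ≤ c := by linarith only [hb0, hbc]
    have hbthr : 2 ^ (p.natDegree + 1) * cB p ≤ b := by
      linarith only [hc1, hQbig, hQQ, hbL]
    have hdlo := diff_lower hdeg hlead hbthr (le_of_lt hbc) hc2b
    have hbQpow : (Q ^ 2) ^ (p.natDegree - 1) ≤ b ^ (p.natDegree - 1) :=
      pow_le_pow_left₀ (by positivity) hbL _
    have hbpow0 : (0:ℤ) ≤ b ^ (p.natDegree - 1) := pow_nonneg hb0 _
    have hDlo2 : 1 * b ^ (p.natDegree - 1) ≤ (c - b) * b ^ (p.natDegree - 1) :=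
      mul_le_mul_of_nonneg_right hD1 hbpow0
    have hfalow : (Q ^ 2) ^ (p.natDegree - 1) + 1 ≤ p.eval a + a := by
      linarith only [heq, hdlo, hDlo2, hbQpow, hD1]
    -- upper bound for f(a) in this case
    have hQsq1 : (1:ℤ) ≤ Q ^ 2 := by nlinarith only [hQ2]
    have hW11 : (1:ℤ) ≤ (Q ^ 2) ^ (p.natDegree - 1) := by
      have h := pow_le_pow_left₀ (by norm_num : (0:ℤ) ≤ 1) hQsq1 (p.natDegree - 1)
      simpa using h
    have habs := abs_eval_sub_eval_le p hb1 (le_of_lt hbc)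
    have hediff : p.eval c - p.eval b ≤
        (c - b) * (cB p * (p.natDegree * c ^ (p.natDegree - 1))) :=
      le_trans (le_abs_self _) habs
    have hc2Q : c ≤ 2 * Q ^ 2 := by linarith only [hcU, hQQ2]
    have hcpow : c ^ (p.natDegree - 1) ≤ 2 ^ (p.natDegree - 1) * (Q ^ 2) ^ (p.natDegree - 1) := by
      calc c ^ (p.natDegree - 1) ≤ (2 * Q ^ 2) ^ (p.natDegree - 1) :=
            pow_le_pow_left₀ hc0 hc2Q _
        _ = 2 ^ (p.natDegree - 1) * (Q ^ 2) ^ (p.natDegree - 1) := mul_pow _ _ _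
    have hdn : (0:ℤ) ≤ (p.natDegree : ℤ) := by positivity
    have hinner : cB p * ((p.natDegree : ℤ) * c ^ (p.natDegree - 1)) ≤
        cB p * ((p.natDegree : ℤ) * (2 ^ (p.natDegree - 1) * (Q ^ 2) ^ (p.natDegree - 1))) :=
      mul_le_mul_of_nonneg_left (mul_le_mul_of_nonneg_left hcpow hdn) (cB_nonneg p)
    have hinner0 : (0:ℤ) ≤ cB p * ((p.natDegree : ℤ) * c ^ (p.natDegree - 1)) :=
      mul_nonneg (cB_nonneg p) (mul_nonneg hdn (pow_nonneg hc0 _))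
    have hDmul : (c - b) * (cB p * ((p.natDegree:ℤ) * c ^ (p.natDegree - 1))) ≤
        (2 * Q) * (cB p * ((p.natDegree:ℤ) * (2 ^ (p.natDegree - 1) * (Q ^ 2) ^ (p.natDegree - 1)))) :=
      mul_le_mul hDQ hinner hinner0 (by linarith only [hQ2])
    have hpd : (2:ℤ) * 2 ^ (p.natDegree - 1) = 2 ^ p.natDegree := by
      rw [← pow_succ']; congr 1; omega
    have hE : (2 * Q) * (cB p * ((p.natDegree:ℤ) * (2 ^ (p.natDegree - 1) * (Q ^ 2) ^ (p.natDegree - 1))))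
        = (cB p * (p.natDegree:ℤ) * 2 ^ p.natDegree) * (Q * (Q ^ 2) ^ (p.natDegree - 1)) := by
      rw [← hpd]; ring
    have hQW : 2 * Q ≤ 2 * (Q * (Q ^ 2) ^ (p.natDegree - 1)) := by
      have h := mul_le_mul_of_nonneg_left hW11 (by linarith only [hQ2] : (0:ℤ) ≤ 2 * Q)
      linarith only [h]
    have hfaup : p.eval a + a ≤
        (cB p * (p.natDegree:ℤ) * 2 ^ p.natDegree + 2) * (Q * (Q ^ 2) ^ (p.natDegree - 1)) := by
      have heqfa : p.eval a + a = (p.eval c - p.eval b) + (c - b) := by linarith only [heq]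
      linarith only [heqfa, hediff, hDmul, hE, hQW, hDQ]
    have hQW1pos : (0:ℤ) < Q * (Q ^ 2) ^ (p.natDegree - 1) :=
      mul_pos (by linarith only [hQ2]) (by linarith only [hW11])
    -- subcases on mi
    rcases (by omega : mi = mj ∨ mi + 1 = mj ∨ mi + 2 ≤ mj) with hmm | hmm | hmm
    · -- mi = mj
      have hPQe : P = Q := by rw [hPdef, hQdef, hmm]
      have hsplit : (Q ^ 2) ^ p.natDegree = Q * (Q * (Q ^ 2) ^ (p.natDegree - 1)) := by
        calc (Q ^ 2) ^ p.natDegree = (Q ^ 2) ^ ((p.natDegree - 1) + 1) := by congr 1; omega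
          _ = (Q ^ 2) ^ (p.natDegree - 1) * Q ^ 2 := pow_succ _ _
          _ = Q * (Q * (Q ^ 2) ^ (p.natDegree - 1)) := by ring
      have h2fa := hfa.2.1
      rw [hPQe] at h2fa
      have hkey : Q * (Q * (Q ^ 2) ^ (p.natDegree - 1)) ≤
          (2 * (cB p * (p.natDegree:ℤ) * 2 ^ p.natDegree + 2)) * (Q * (Q ^ 2) ^ (p.natDegree - 1)) := by
        linarith only [h2fa, hfaup, hsplit]
      have hQle := le_of_mul_le_mul_right hkey hQW1pos
      linarith only [hQle, hc2, hQbig]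
    · -- mi + 1 = mj
      have hPsqQ : P ^ 2 = Q := by
        rw [hPsq, hQdef]; congr 1
        have h : mj - 1 = mi := by omega
        rw [h]
      rcases (by omega : p.natDegree = 2 ∨ 3 ≤ p.natDegree) with hd2 | hd3
      · -- quadratic case
        have hco : p.coeff 0 = 0 := by rwa [Polynomial.coeff_zero_eq_eval_zero]
        have hlc : p.coeff 2 = p.leadingCoeff := by
          conv_lhs => rw [show (2:ℕ) = p.natDegree from hd2.symm]
          exact Polynomial.coeff_natDegree
        have hpev : ∀ z : ℤ, p.eval z = p.coeff 1 * z + p.leadingCoeff * z ^ 2 := by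
          intro z
          rw [Polynomial.eval_eq_sum_range, hd2, Finset.sum_range_succ, Finset.sum_range_succ,
            Finset.sum_range_one, hco, hlc]
          ring
        have hL1 : (1:ℤ) ≤ p.leadingCoeff := hlead
        have habs2 := abs_le.mp hc4
        have hP14 : (14:ℤ) ≤ P := by linarith only [hPbig, hc13]
        have hP0 : (0:ℤ) ≤ P := by linarith only [hP14]
        have heP : p.coeff 1 + 1 ≤ P := by linarith only [habs2.2, hPbig]
        have heP' : -P ≤ p.coeff 1 + 1 := by linarith only [habs2.1, hPbig]
        have hfa_eq : p.eval a + a = p.leadingCoeff * a ^ 2 + (p.coeff 1 + 1) * a := by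
          rw [hpev a]; ring
        have hdiff_eq : (p.eval c + c) - (p.eval b + b)
            = (c - b) * (p.leadingCoeff * (c + b) + (p.coeff 1 + 1)) := by
          rw [hpev b, hpev c]; ring
        have hQP4 : Q ^ 2 = P ^ 4 := by rw [← hPsqQ]; ring
        have hcb2 : 2 * P ^ 4 ≤ c + b := by linarith only [hbL, hcL, hQP4]
        have hLcb : p.leadingCoeff * (2 * P ^ 4) ≤ p.leadingCoeff * (c + b) :=
          mul_le_mul_of_nonneg_left hcb2 (by linarith only [hL1])
        have hXlow : 2 * p.leadingCoeff * P ^ 4 - P ≤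
            p.leadingCoeff * (c + b) + (p.coeff 1 + 1) := by
          linarith only [hLcb, heP']
        have hLP4 : (0:ℤ) ≤ (p.leadingCoeff - 1) * P ^ 4 :=
          mul_nonneg (by linarith only [hL1]) (by positivity)
        have hPP4 : P ≤ P ^ 4 := le_self_pow₀ (by linarith only [hP14]) (by norm_num)
        have hP4nn : (0:ℤ) ≤ P ^ 4 := pow_nonneg hP0 4
        have hX0 : (0:ℤ) ≤ p.leadingCoeff * (c + b) + (p.coeff 1 + 1) := by
          linarith only [hXlow, hLP4, hPP4, hP4nn]
        have hDX := le_mul_of_one_le_left hX0 hD1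
        have hfa_lb : 2 * p.leadingCoeff * P ^ 4 - P ≤
            p.leadingCoeff * a ^ 2 + (p.coeff 1 + 1) * a := by
          linarith only [hXlow, hDX, hdiff_eq, heq, hfa_eq]
        have haU2 : a ≤ P ^ 2 + 2 * P := by linarith only [haU]
        have ha0 : (0:ℤ) ≤ a := by linarith only [haL, sq_nonneg P]
        have hasq : a ^ 2 ≤ (P ^ 2 + 2 * P) ^ 2 := pow_le_pow_left₀ ha0 haU2 2
        have hfa_ub : p.leadingCoeff * a ^ 2 + (p.coeff 1 + 1) * a ≤
            p.leadingCoeff * (P ^ 2 + 2 * P) ^ 2 + P * (P ^ 2 + 2 * P) := by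
          have u1 : p.leadingCoeff * a ^ 2 ≤ p.leadingCoeff * (P ^ 2 + 2 * P) ^ 2 :=
            mul_le_mul_of_nonneg_left hasq (by linarith only [hL1])
          have u2 : (p.coeff 1 + 1) * a ≤ P * a := mul_le_mul_of_nonneg_right heP ha0
          have u3 : P * a ≤ P * (P ^ 2 + 2 * P) := mul_le_mul_of_nonneg_left haU2 hP0
          linarith only [u1, u2, u3]
        have hfinal := quad_final hL1 hP14
        linarith only [hfa_lb, hfa_ub, hfinal]
      · -- degree at least 3
        have hfaQd : p.eval a + a ≤ (cB p * 2 ^ p.natDegree + 1) * Q ^ p.natDegree := by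
          have h := hfa.1; rw [hPsqQ] at h; exact h
        have hE2 : (Q ^ 2) ^ (p.natDegree - 1) = Q ^ (p.natDegree - 2) * Q ^ p.natDegree := by
          rw [← pow_mul, ← pow_add]; congr 1; omega
        have hQQd : Q ≤ Q ^ (p.natDegree - 2) := le_self_pow₀ (by linarith only [hQ2]) (by omega)
        have hQd0 : (0:ℤ) ≤ Q ^ p.natDegree := pow_nonneg (by linarith only [hQ2]) _
        have hmul2 : Q * Q ^ p.natDegree ≤ Q ^ (p.natDegree - 2) * Q ^ p.natDegree :=
          mul_le_mul_of_nonneg_right hQQd hQd0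
        have hkey : Q * Q ^ p.natDegree ≤ (cB p * 2 ^ p.natDegree + 1) * Q ^ p.natDegree := by
          linarith only [hfalow, hfaQd, hE2, hmul2]
        have hQdpos : (0:ℤ) < Q ^ p.natDegree := pow_pos (by linarith only [hQ2]) _
        have hQle := le_of_mul_le_mul_right hkey hQdpos
        linarith only [hQle, hc3, hQbig, hcBd]
    · -- mi + 2 ≤ mj
      have hG2 : (2:ℤ) ≤ 2 ^ 2 ^ (mj - 2) := by
        calc (2:ℤ) = 2 ^ 1 := (pow_one 2).symm
        _ ≤ _ := pow_le_pow_right₀ one_le_two Nat.one_le_two_pow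
      have hGbig : cmax p < 2 ^ 2 ^ (mj - 2) := big_pow (by omega)
      have hGsq : ((2:ℤ) ^ 2 ^ (mj - 2)) ^ 2 = Q := by
        rw [hQdef, ← pow_mul]; congr 1
        have h := two_pow_pred (show 1 ≤ mj - 1 by omega)
        have hidx : mj - 1 - 1 = mj - 2 := by omega
        rw [hidx] at h
        omega
      have hP2G : P ^ 2 ≤ 2 ^ 2 ^ (mj - 2) := by
        rw [hPsq]
        exact pow_le_pow_right₀ one_le_two (Nat.pow_le_pow_right (by norm_num) (by omega))
      have hfaG : p.eval a + a ≤
          (cB p * 2 ^ p.natDegree + 1) * ((2:ℤ) ^ 2 ^ (mj - 2)) ^ p.natDegree :=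
        le_trans hfa.1 (mul_le_mul_of_nonneg_left (pow_le_pow_left₀ (by positivity) hP2G _) hC2nn)
      have hE3 : (Q ^ 2) ^ (p.natDegree - 1)
          = ((2:ℤ) ^ 2 ^ (mj - 2)) ^ (3 * p.natDegree - 4) * ((2:ℤ) ^ 2 ^ (mj - 2)) ^ p.natDegree := by
        rw [← hGsq, ← pow_mul, ← pow_mul, ← pow_add]; congr 1; omega
      have hGG : (2:ℤ) ^ 2 ^ (mj - 2) ≤ ((2:ℤ) ^ 2 ^ (mj - 2)) ^ (3 * p.natDegree - 4) :=
        le_self_pow₀ (by linarith only [hG2]) (by omega)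
      have hGd0 : (0:ℤ) ≤ ((2:ℤ) ^ 2 ^ (mj - 2)) ^ p.natDegree := by positivity
      have hmul3 := mul_le_mul_of_nonneg_right hGG hGd0
      have hkey : (2:ℤ) ^ 2 ^ (mj - 2) * ((2:ℤ) ^ 2 ^ (mj - 2)) ^ p.natDegree ≤
          (cB p * 2 ^ p.natDegree + 1) * ((2:ℤ) ^ 2 ^ (mj - 2)) ^ p.natDegree := by
        linarith only [hfalow, hfaG, hE3, hmul3]
      have hGdpos : (0:ℤ) < ((2:ℤ) ^ 2 ^ (mj - 2)) ^ p.natDegree := by positivity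
      have hGle := le_of_mul_le_mul_right hkey hGdpos
      linarith only [hGle, hc3, hGbig, hcBd]
  · -- mj < mk : c is too large
    have hQ2T : Q ^ 2 ≤ T := by
      rw [hQsq, hTdef]
      exact pow_le_pow_right₀ one_le_two (Nat.pow_le_pow_right (by norm_num) (by omega))
    have hQ4 : ((Q ^ 2) ^ 2) ^ p.natDegree ≤ (T ^ 2) ^ p.natDegree :=
      pow_le_pow_left₀ (by positivity) (pow_le_pow_left₀ (by positivity) hQ2T 2) _
    have hQ4W : ((Q ^ 2) ^ 2) ^ p.natDegree = ((Q ^ 2) ^ p.natDegree) ^ 2 :=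
      pow_right_comm _ 2 _
    have hQsq1 : (1:ℤ) ≤ Q ^ 2 := by nlinarith only [hQ2]
    have hW1 : Q ^ 2 ≤ (Q ^ 2) ^ p.natDegree := le_self_pow₀ hQsq1 (by omega)
    have hWQ : Q ≤ (Q ^ 2) ^ p.natDegree := le_trans (sq_ge' hQ2) hW1
    have hW0 : (0:ℤ) < (Q ^ 2) ^ p.natDegree := pow_pos (by positivity) _
    have hPQ2 : (P ^ 2) ^ p.natDegree ≤ (Q ^ 2) ^ p.natDegree :=
      pow_le_pow_left₀ (by positivity) (pow_le_pow_left₀ (by linarith only [hP2]) hPQ 2) _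
    have hfaQ : p.eval a + a ≤ (cB p * 2 ^ p.natDegree + 1) * (Q ^ 2) ^ p.natDegree :=
      le_trans hfa.1 (mul_le_mul_of_nonneg_left hPQ2 hC2nn)
    have hfbQ : p.eval b + b ≤ (cB p * 2 ^ p.natDegree + 1) * (Q ^ 2) ^ p.natDegree := hfb.1
    have hcmlt : 4 * (cB p * 2 ^ p.natDegree + 1) < (Q ^ 2) ^ p.natDegree := by
      linarith only [hc3, hQbig, hWQ]
    have hmul := mul_lt_mul_of_pos_right hcmlt hW0
    have hchain : ((Q ^ 2) ^ p.natDegree) ^ 2 ≤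
        4 * (cB p * 2 ^ p.natDegree + 1) * (Q ^ 2) ^ p.natDegree := by
      linarith only [hQ4, hQ4W, hfc.2.1, heq, hfaQ, hfbQ]
    linarith only [hmul, hchain]

theorem stmt12 (p : Polynomial ℤ) (h0 : p.eval 0 = 0) (hdeg : 2 ≤ p.natDegree)
    (hlead : 0 < p.leadingCoeff) :
    ∃ β : ℕ,
      (∀ a ∈ {s : ℕ | ∃ I : Finset ℕ, I.Nonempty ∧ (∀ i ∈ I, β < i) ∧
          (s : ℤ) = p.eval ((∑ i ∈ I, 2 ^ (2 ^ i) : ℕ) : ℤ) + (∑ i ∈ I, 2 ^ (2 ^ i) : ℕ)},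
       ∀ b ∈ {s : ℕ | ∃ I : Finset ℕ, I.Nonempty ∧ (∀ i ∈ I, β < i) ∧
          (s : ℤ) = p.eval ((∑ i ∈ I, 2 ^ (2 ^ i) : ℕ) : ℤ) + (∑ i ∈ I, 2 ^ (2 ^ i) : ℕ)},
        a + b ∉ {s : ℕ | ∃ I : Finset ℕ, I.Nonempty ∧ (∀ i ∈ I, β < i) ∧
          (s : ℤ) = p.eval ((∑ i ∈ I, 2 ^ (2 ^ i) : ℕ) : ℤ) + (∑ i ∈ I, 2 ^ (2 ^ i) : ℕ)}) ∧
      IPnStar 2 {s : ℕ | ∃ I : Finset ℕ, I.Nonempty ∧ (∀ i ∈ I, β < i) ∧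
          (s : ℤ) = p.eval ((∑ i ∈ I, 2 ^ (2 ^ i) : ℕ) : ℤ) + (∑ i ∈ I, 2 ^ (2 ^ i) : ℕ)}ᶜ := by
  refine ⟨(cmax p).toNat + 3, ?_⟩
  set S : Set ℕ := {s : ℕ | ∃ I : Finset ℕ, I.Nonempty ∧ (∀ i ∈ I, (cmax p).toNat + 3 < i) ∧
      (s : ℤ) = p.eval ((∑ i ∈ I, 2 ^ (2 ^ i) : ℕ) : ℤ) + (∑ i ∈ I, 2 ^ (2 ^ i) : ℕ)} with hSdef
  have hSF : ∀ a ∈ S, ∀ b ∈ S, a + b ∉ S := by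
    intro a ha b hb hab
    rw [hSdef] at ha hb hab
    obtain ⟨I, hI, hβI, haI⟩ := ha
    obtain ⟨J, hJ, hβJ, hbJ⟩ := hb
    obtain ⟨K, hK, hβK, hcK⟩ := hab
    push_cast at hcK
    have heq : (p.eval ((∑ i ∈ I, 2 ^ 2 ^ i : ℕ) : ℤ) + ((∑ i ∈ I, 2 ^ 2 ^ i : ℕ) : ℤ)) +
        (p.eval ((∑ i ∈ J, 2 ^ 2 ^ i : ℕ) : ℤ) + ((∑ i ∈ J, 2 ^ 2 ^ i : ℕ) : ℤ)) =
        p.eval ((∑ i ∈ K, 2 ^ 2 ^ i : ℕ) : ℤ) + ((∑ i ∈ K, 2 ^ 2 ^ i : ℕ) : ℤ) := by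
      rw [← haI, ← hbJ]
      exact_mod_cast hcK
    rcases le_total (I.max' hI) (J.max' hJ) with h | h
    · exact sumfree_main h0 hdeg hlead hI hJ hK hβI hβJ hβK h heq
    · exact sumfree_main h0 hdeg hlead hJ hI hK hβJ hβI hβK h (by linarith only [heq])
  refine ⟨hSF, ?_⟩
  intro A hA
  by_contra hne
  rw [Set.not_nonempty_iff_eq_empty] at hne
  have hsub : ∀ z : ℕ, z ∈ A → z ∈ S := by
    intro z hz
    by_contra hzS
    have hmem : z ∈ (Sᶜ ∩ A) := ⟨hzS, hz⟩
    rw [hne] at hmem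
    exact hmem
  obtain ⟨i, x, hpos, hsum⟩ := hA 1 one_pos (fun _ => 0)
  have h0m : x 0 ∈ A := by
    have h := (hsum {0} ⟨0, Finset.mem_singleton_self 0⟩).1
    simpa using h
  have h1m : x 1 ∈ A := by
    have h := (hsum {1} ⟨1, Finset.mem_singleton_self 1⟩).1
    simpa using h
  have h01 : x 0 + x 1 ∈ A := by
    have h := (hsum Finset.univ ⟨0, Finset.mem_univ 0⟩).1
    rw [Fin.sum_univ_two] at h
    exact h
  exact hSF (x 0) (hsub _ h0m) (x 1) (hsub _ h1m) (hsub _ h01)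
end

section
/- Let p be an integral polynomial with p(0) = 0 and deg p ≥ 2. Then there exists a Δ*-set A ⊆ ℤ such that the set {(m,n) ∈ ℕ² : m + p(n) ∈ A} is not a Δ*-set in ℕ². In fact, A = ℤ \ {p(n) + n : n ∈ ℤ} works: it is a Δ*-set, and {(m,n) ∈ ℕ² : m + p(n) ∈ A} is disjoint from Δ({(n_i, n_i)}) for any increasing sequence (n_i) in ℕ. -/
/-- The difference set `Δ({x_n}) = {x_n - x_m : n > m}`, phrased additively. -/
def DeltaOf {M : Type*} [AddCommMonoid M] (x : ℕ → M) : Set M :=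
  {d | ∃ m n : ℕ, m < n ∧ x m + d = x n}

/-- A Δ-set: a set containing `Δ({x_n})` for some injective sequence. -/
def DeltaSet {M : Type*} [AddCommMonoid M] (A : Set M) : Prop :=
  ∃ x : ℕ → M, Function.Injective x ∧ DeltaOf x ⊆ A

/-- A Δ*-set: a set meeting every Δ-set. -/
def DeltaStar {M : Type*} [AddCommMonoid M] (B : Set M) : Prop :=
  ∀ A : Set M, DeltaSet A → (B ∩ A).Nonempty

open Polynomial in
lemma fin_shift (q : Polynomial ℤ) (hq : 2 ≤ q.natDegree) (s e : ℤ) (he : e ≠ 0) :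
    {b : ℤ | q.eval (b + e) = q.eval b + s}.Finite := by
  by_contra hinf
  have hinf : {b : ℤ | q.eval (b + e) = q.eval b + s}.Infinite := hinf
  set r := q.comp (X + C e) - q - C s with hr
  have hr0 : r = 0 := by
    apply Polynomial.eq_zero_of_infinite_isRoot
    apply hinf.mono
    intro b hb
    simp only [Set.mem_setOf_eq] at hb ⊢
    simp [hr, Polynomial.IsRoot, Polynomial.eval_comp, hb]
  have hstep : ∀ t : ℤ, q.eval (t + e) = q.eval t + s := by
    intro t
    have := congrArg (Polynomial.eval t) hr0
    simp [hr, Polynomial.eval_comp] at this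
    linarith
  have hk : ∀ k : ℕ, q.eval (e * k) = q.eval 0 + s * k := by
    intro k
    induction k with
    | zero => simp
    | succ n ih =>
      have : e * ((n : ℤ) + 1) = e * n + e := by ring
      push_cast
      rw [this, hstep (e * n), ih]
      ring
  set h := q.comp (C e * X) - C (q.eval 0) - C s * X with hh
  have hh0 : h = 0 := by
    apply Polynomial.eq_zero_of_infinite_isRoot
    apply Set.infinite_of_injective_forall_mem (f := fun k : ℕ => (k : ℤ))
    · exact fun a b hab => Nat.cast_injective hab
    · intro k
      simp only [Set.mem_setOf_eq, Polynomial.IsRoot, hh]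
      simp [Polynomial.eval_comp, hk k, mul_comm]
  have heq : q.comp (C e * X) = C (q.eval 0) + C s * X := by
    have : q.comp (C e * X) - (C (q.eval 0) + C s * X) = 0 := by
      rw [← hh0, hh]; ring
    linear_combination this
  have h1 : (q.comp (C e * X)).natDegree = q.natDegree := by
    rw [Polynomial.natDegree_comp, Polynomial.natDegree_C_mul_X e he, mul_one]
  have h2 : (C (q.eval 0) + C s * X).natDegree ≤ 1 := by
    rw [add_comm]; exact Polynomial.natDegree_linear_le
  rw [heq] at h1
  omega

open Polynomial in
lemma fin_pairs (q : Polynomial ℤ) (hq : 2 ≤ q.natDegree) (s : ℤ) (hs : s ≠ 0) :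
    {bc : ℤ × ℤ | q.eval bc.2 - q.eval bc.1 = s}.Finite := by
  have hD : {e : ℤ | e ∣ s ∧ e ≠ 0}.Finite := by
    apply Set.Finite.subset (Set.finite_Icc (-|s|) |s|)
    intro e ⟨hed, _⟩
    have h1 : |e| ≤ |s| := Int.le_of_dvd (abs_pos.mpr hs) ((abs_dvd_abs e s).mpr hed)
    exact abs_le.mp h1
  apply Set.Finite.subset
    (Set.Finite.biUnion hD (fun e he =>
      ((fin_shift q hq s e he.2).image (fun b => (b, b + e)))))
  rintro ⟨b, c⟩ hbc
  simp only [Set.mem_setOf_eq] at hbc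
  have hdvd : (c - b) ∣ s := by
    rw [← hbc]; exact Polynomial.sub_dvd_eval_sub c b q
  have hne : c - b ≠ 0 := by
    intro h
    apply hs
    rw [← hbc, sub_eq_zero.mp h, sub_self]
  refine Set.mem_biUnion (s := {e : ℤ | e ∣ s ∧ e ≠ 0}) ⟨hdvd, hne⟩ ?_
  refine ⟨b, ?_, ?_⟩
  · simp only [Set.mem_setOf_eq]
    have : b + (c - b) = c := by ring
    rw [this]; linarith
  · show (b, b + (c - b)) = (b, c)
    congr 1
    ring

theorem stmt13 (p : Polynomial ℤ) (h0 : p.eval 0 = 0) (hdeg : 2 ≤ p.natDegree) :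
    ∃ A : Set ℤ, DeltaStar A ∧
      ¬ DeltaStar {q : ℕ × ℕ | ((q.1 : ℤ) + p.eval (q.2 : ℤ)) ∈ A} := by
  set q : Polynomial ℤ := p + Polynomial.X with hq
  have hqd : 2 ≤ q.natDegree := by
    rw [hq, Polynomial.natDegree_add_eq_left_of_natDegree_lt
      (by rw [Polynomial.natDegree_X]; omega)]
    exact hdeg
  have hqe : ∀ t : ℤ, q.eval t = p.eval t + t := by
    intro t; simp [hq]
  refine ⟨{z : ℤ | ∀ k : ℤ, q.eval k ≠ z}, ?_, ?_⟩
  · -- A is a Δ*-set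
    rintro C ⟨x, hinj, hsub⟩
    have key : ({z : ℤ | ∀ k : ℤ, q.eval k ≠ z} ∩ DeltaOf x).Nonempty := by
      by_contra hne
      rw [Set.not_nonempty_iff_eq_empty] at hne
      have hall : ∀ m n : ℕ, m < n → ∃ k : ℤ, q.eval k = x n - x m := by
        intro m n hmn
        have hd : (x n - x m) ∈ DeltaOf x := ⟨m, n, hmn, by ring⟩
        by_contra hk
        push_neg at hk
        have : (x n - x m) ∈ ({z : ℤ | ∀ k : ℤ, q.eval k ≠ z} ∩ DeltaOf x) := ⟨hk, hd⟩
        rw [hne] at this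
        exact this
      choose b hb using fun m : ℕ => hall 1 (m + 2) (by omega)
      choose c hc using fun m : ℕ => hall 0 (m + 2) (by omega)
      have hs : x 1 - x 0 ≠ 0 :=
        sub_ne_zero.mpr (fun h => one_ne_zero (hinj h))
      have hF := fin_pairs q hqd (x 1 - x 0) hs
      have hrange : Set.range (fun m : ℕ => (b m, c m)) ⊆
          {bc : ℤ × ℤ | q.eval bc.2 - q.eval bc.1 = x 1 - x 0} := by
        rintro _ ⟨m, rfl⟩
        simp only [Set.mem_setOf_eq]
        rw [hb m, hc m]; ring
      have hfinj : Function.Injective (fun m : ℕ => (b m, c m)) := by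
        intro m m' hmm
        have hcc : c m = c m' := congrArg Prod.snd hmm
        have : x (m + 2) - x 0 = x (m' + 2) - x 0 := by
          rw [← hc m, ← hc m', hcc]
        have := hinj (by linarith : x (m + 2) = x (m' + 2))
        omega
      exact Set.infinite_range_of_injective hfinj (hF.subset hrange)
    obtain ⟨z, hzA, hzD⟩ := key
    exact ⟨z, hzA, hsub hzD⟩
  · -- the preimage set is not a Δ*-set
    intro hDS
    have hinj2 : Function.Injective (fun i : ℕ => (i, i)) := by
      intro a b hab
      exact congrArg Prod.fst hab
    obtain ⟨z, hzB, hzC⟩ := hDS (DeltaOf (fun i : ℕ => (i, i)))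
      ⟨fun i : ℕ => (i, i), hinj2, subset_rfl⟩
    obtain ⟨m, n, hmn, heq⟩ := hzC
    have h1 : m + z.1 = n := congrArg Prod.fst heq
    have h2 : m + z.2 = n := congrArg Prod.snd heq
    have hz12 : z.1 = z.2 := by omega
    have := hzB (z.1 : ℤ)
    apply this
    rw [hqe, hz12]
    ring
end

section
/- Let d ∈ ℕ and p_1,...,p_d be integral polynomials with p_i(0) = 0 and max deg p_i ≥ 2 (leading coefficients positive where degree ≥ 2). Then there exists an IP*-set A in ℕ such that {(m,n) ∈ ℕ² : m + p_1(n) ∈ A, ..., m + p_d(n) ∈ A} is not an IP*-set in ℕ². This reduces to the d = 1 case via the inclusion {(m,n) : m + p_1(n), ..., m + p_d(n) ∈ A} ⊆ {(m,n) : m + p_j(n) ∈ A} for j with deg p_j ≥ 2. -/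
open Polynomial Filter

theorem stmt19 (d : ℕ) (p : Fin d → Polynomial ℤ) (h0 : ∀ i, (p i).eval 0 = 0)
    (hdeg : ∃ j, 2 ≤ (p j).natDegree)
    (hlead : ∀ i, 2 ≤ (p i).natDegree → 0 < (p i).leadingCoeff) :
    ∃ A : Set ℕ, IPStar A ∧
      ¬ IPStar {q : ℕ × ℕ |
        ∀ i, ((q.1 : ℤ) + (p i).eval (q.2 : ℤ)) ∈ (((↑) : ℕ → ℤ) '' A)} := by
  obtain ⟨j, hj⟩ := hdeg
  set Q : Polynomial ℤ := p j with hQdef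
  have hlc : 0 < Q.leadingCoeff := hlead j hj
  set A : Set ℕ := {n : ℕ | ∀ r : ℤ, 1 ≤ r → Q.eval r ≠ (n : ℤ)} with hAdef
  refine ⟨A, ?_, ?_⟩
  · -- A is IP*
    intro B hB
    obtain ⟨y, hy, hyB⟩ := hB
    by_contra hempty
    rw [Set.not_nonempty_iff_eq_empty] at hempty
    have hval : ∀ s ∈ FS y, ∃ r : ℤ, 1 ≤ r ∧ Q.eval r = (s : ℤ) := by
      intro s hs
      by_contra hcon
      push_neg at hcon
      have hsA : s ∈ A := fun r hr => hcon r hr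
      have : s ∈ A ∩ B := ⟨hsA, hyB hs⟩
      rw [hempty] at this
      exact this
    -- real polynomial analysis
    have hPnd : (Q.map (Int.castRingHom ℝ)).natDegree = Q.natDegree :=
      natDegree_map_eq_of_injective Int.cast_injective Q
    set P : Polynomial ℝ := Q.map (Int.castRingHom ℝ) with hPdef
    have hcoeffD : P.coeff Q.natDegree = (Q.leadingCoeff : ℝ) := by
      rw [hPdef, coeff_map, leadingCoeff]; rfl
    have hdercoeff : P.derivative.coeff (Q.natDegree - 1)
        = (Q.leadingCoeff : ℝ) * Q.natDegree := by
      rw [coeff_derivative, show Q.natDegree - 1 + 1 = Q.natDegree by omega, hcoeffD]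
      congr 1
      rw [← Nat.cast_add_one, show Q.natDegree - 1 + 1 = Q.natDegree by omega]
    have hdernd : P.derivative.natDegree = Q.natDegree - 1 := by
      refine le_antisymm ((natDegree_derivative_le P).trans (by omega)) ?_
      refine le_natDegree_of_ne_zero ?_
      rw [hdercoeff]
      have : (0:ℝ) < Q.leadingCoeff := by exact_mod_cast hlc
      positivity
    have hderlc : 0 < P.derivative.leadingCoeff := by
      rw [leadingCoeff, hdernd, hdercoeff]
      have : (0:ℝ) < Q.leadingCoeff := by exact_mod_cast hlc
      positivity
    have htend : Tendsto (fun x => eval x P.derivative) atTop atTop := by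
      apply tendsto_atTop_of_leadingCoeff_nonneg _ ?_ hderlc.le
      rw [← natDegree_pos_iff_degree_pos, hdernd]; omega
    set a : ℕ := y 0 with hadef
    have ha : 1 ≤ a := Nat.one_le_iff_ne_zero.2 (hy 0)
    obtain ⟨T, hT⟩ := eventually_atTop.1 (htend.eventually_ge_atTop ((a : ℝ) + 1))
    -- gap lemma
    have hgap : ∀ u v : ℝ, T ≤ u → u < v →
        ((a : ℝ) + 1) * (v - u) ≤ eval v P - eval u P := by
      intro u v hu huv
      obtain ⟨x, hx, hslope⟩ := exists_hasDerivAt_eq_slope (fun x => eval x P)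
        (fun x => eval x P.derivative) huv (P.continuous.continuousOn)
        (fun x _ => P.hasDerivAt x)
      have hcx : (a : ℝ) + 1 ≤ eval x P.derivative := hT x (hu.trans hx.1.le)
      rw [hslope] at hcx
      have := mul_le_mul_of_nonneg_right hcx (by linarith : (0:ℝ) ≤ v - u)
      rwa [div_mul_cancel₀] at this
      linarith
    -- evaluation at integer points
    have hevalint : ∀ r : ℤ, eval (r : ℝ) P = ((Q.eval r : ℤ) : ℝ) := by
      intro r
      rw [hPdef, eval_intCast_map]
      simp
    -- bound on values at small points
    set R : ℕ := ⌈T⌉₊ + 1 with hRdef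
    have hTR : T ≤ (R : ℝ) := (Nat.le_ceil T).trans (by exact_mod_cast Nat.le_succ _)
    have hRne : (Finset.Icc (1:ℤ) (R:ℤ)).Nonempty := by
      refine ⟨1, Finset.mem_Icc.2 ⟨le_refl _, ?_⟩⟩
      exact_mod_cast Nat.one_le_iff_ne_zero.2 (by omega)
    obtain ⟨C, hC⟩ : ∃ C : ℤ, ∀ r : ℤ, 1 ≤ r → r ≤ (R:ℤ) → Q.eval r ≤ C := by
      refine ⟨((Finset.Icc (1:ℤ) (R:ℤ)).image (fun r => Q.eval r)).max' (hRne.image _), ?_⟩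
      intro r h1 h2
      exact Finset.le_max' ((Finset.Icc (1:ℤ) (R:ℤ)).image (fun r => Q.eval r)) (Q.eval r)
        (Finset.mem_image.2 ⟨r, Finset.mem_Icc.2 ⟨h1, h2⟩, rfl⟩)
    -- choose a large finite sum
    set m : ℕ := C.toNat + 1 with hmdef
    set F1 : Finset ℕ := (Finset.range m).image (· + 1) with hF1def
    set s1 : ℕ := ∑ i ∈ Finset.range m, y (i + 1) with hs1def
    have hsumF1 : ∑ i ∈ F1, y i = s1 := by
      rw [hF1def, Finset.sum_image (by intro x _ y _ h; beta_reduce at h; omega)]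
    have hs1m : m ≤ s1 := by
      calc m = ∑ _i ∈ Finset.range m, 1 := by simp
      _ ≤ s1 := Finset.sum_le_sum (fun i _ => Nat.one_le_iff_ne_zero.2 (hy (i+1)))
    have hs1FS : s1 ∈ FS y := by
      refine ⟨F1, ?_, hsumF1.symm⟩
      refine ⟨1, ?_⟩
      rw [hF1def]
      exact Finset.mem_image.2 ⟨0, Finset.mem_range.2 (by omega), rfl⟩
    have h0F1 : 0 ∉ F1 := by
      rw [hF1def]
      intro h
      obtain ⟨i, _, hi⟩ := Finset.mem_image.1 h
      omega
    have hs2FS : a + s1 ∈ FS y := by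
      refine ⟨insert 0 F1, Finset.insert_nonempty _ _, ?_⟩
      rw [Finset.sum_insert h0F1, hsumF1, hadef]
    obtain ⟨r1, hr11, hr1⟩ := hval s1 hs1FS
    obtain ⟨r2, hr21, hr2⟩ := hval (a + s1) hs2FS
    have hCs1 : C < (s1 : ℤ) := by
      have h1 : C ≤ (C.toNat : ℤ) := Int.self_le_toNat C
      have h2 : (m : ℤ) ≤ (s1 : ℤ) := by exact_mod_cast hs1m
      omega
    have hr1R : (R : ℤ) < r1 := by
      by_contra hcon
      push_neg at hcon
      have := hC r1 hr11 hcon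
      omega
    have hr2R : (R : ℤ) < r2 := by
      by_contra hcon
      push_neg at hcon
      have := hC r2 hr21 hcon
      have h2 : (s1 : ℤ) ≤ ((a + s1 : ℕ) : ℤ) := by push_cast; omega
      omega
    -- the two values differ by a
    have hkey : eval (r2 : ℝ) P - eval (r1 : ℝ) P = (a : ℝ) := by
      rw [hevalint, hevalint, hr1, hr2]
      push_cast
      ring
    have hTr1 : T ≤ (r1 : ℝ) := by
      refine hTR.trans ?_
      exact_mod_cast hr1R.le
    have hTr2 : T ≤ (r2 : ℝ) := by
      refine hTR.trans ?_
      exact_mod_cast hr2R.le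
    have hanneg : (0:ℝ) ≤ (a:ℝ) := Nat.cast_nonneg a
    rcases lt_trichotomy r1 r2 with hlt | heq | hgt
    · have h1 := hgap _ _ hTr1 (Int.cast_lt.2 hlt)
      rw [hkey] at h1
      have h2 : (1 : ℝ) ≤ (r2 : ℝ) - (r1 : ℝ) := by
        have h' : r1 + 1 ≤ r2 := hlt
        have h'' : ((r1 : ℝ)) + 1 ≤ (r2 : ℝ) := by exact_mod_cast h'
        linarith
      have h3 := mul_le_mul_of_nonneg_left h2 (by linarith : (0:ℝ) ≤ (a:ℝ) + 1)
      rw [mul_one] at h3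
      linarith
    · rw [heq] at hkey
      have hza : (a : ℝ) = 0 := by linarith
      have : a = 0 := by exact_mod_cast hza
      omega
    · have h1 := hgap _ _ hTr2 (Int.cast_lt.2 hgt)
      have h2 : (1 : ℝ) ≤ (r1 : ℝ) - (r2 : ℝ) := by
        have h' : r2 + 1 ≤ r1 := hgt
        have h'' : ((r2 : ℝ)) + 1 ≤ (r1 : ℝ) := by exact_mod_cast h'
        linarith
      have h3 := mul_le_mul_of_nonneg_left h2 (by linarith : (0:ℝ) ≤ (a:ℝ) + 1)
      rw [mul_one] at h3
      linarith
  · -- the polynomial-return set is not IP*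
    intro h
    obtain ⟨s, hsS, hsFS⟩ := h (FS (fun _ => ((0 : ℕ), (1 : ℕ))))
      ⟨fun _ => ((0 : ℕ), (1 : ℕ)), fun n => by simp [Prod.ext_iff], subset_rfl⟩
    obtain ⟨F, hF, hsum⟩ := hsFS
    have hsum' : s = (0, F.card) := by
      rw [hsum, Finset.sum_const]
      ext <;> simp
    have hmem := hsS j
    rw [hsum'] at hmem
    obtain ⟨aa, haa, hcast⟩ := hmem
    refine haa (F.card : ℤ) ?_ ?_
    · exact_mod_cast hF.card_pos
    · simp only [Nat.cast_zero, zero_add] at hcast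
      rw [← hQdef] at hcast
      exact hcast.symm
end
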